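/- arXiv:1607.04319 — 8 statements merged into one kernel-verified Lean document; each statement's English description precedes it below -/
import Mathlib

section
/- Let P be a Markov kernel on a measurable space X, let V : X → [0,∞) be measurable, and let γ ∈ (0,1) and K > 0 be constants such that ∫ V(y) P(x,dy) ≤ γ·V(x) + K for every x ∈ X. Let R > 2K/(1−γ), set C = {x ∈ X : V(x) ≤ R}, and suppose there exist ζ ∈ (0,1) and a probability measure ν on X such that P(x,A) ≥ ζ·ν(A) for every x ∈ C and every measurable set A. Then for any ζ₀ ∈ (0,ζ) and any γ₀ ∈ (γ + 2K/R, 1), setting β = ζ₀/K and ζ̄ = max(1 − (ζ − ζ₀), (2 + Rβγ₀)/(2 + Rβ)), one has ζ̄ < 1 and ρ_β(μ₁P, μ₂P) ≤ ζ̄ · ρ_β(μ₁, μ₂) for all probability measures μ₁, μ₂ on X with ∫V dμ₁ < ∞ and ∫V dμ₂ < ∞. -/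
open MeasureTheory ProbabilityTheory ENNReal

/-!
Write `μ₁ - μ₂ = η - θ` with `η, θ` the Jordan parts, so that `ρ_β(μ₁, μ₂) = ∫ (1 + βV) d(η + θ)`
and `η, θ` have equal mass. By the minorization, `ηP` and `θP` both dominate
`ζ · min (η C) (θ C) · ν`; this common component cancels in `μ₁P - μ₂P = ηP - θP`, which saves
`2ζ · min (η C) (θ C)` against the drift bound `∫ (1 + βV) d(η + θ)P ≤ ∫ (1 + βγV + βK) d(η + θ)`.
If `η` and `θ` keep most of their mass in `C` the saving wins; otherwise a definite part of the
mass sits where `V > R`, and there the drift contracts the `βV` part of the weight. The choice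
`β = ζ₀ / K` balances the two cases.
-/

/-- The total variation measure `|μ - ν|` of the difference of two (finite) measures. -/
noncomputable def tvMeasure {X : Type*} [MeasurableSpace X] (μ ν : Measure X) : Measure X := by
  classical
  exact if h : IsFiniteMeasure μ ∧ IsFiniteMeasure ν then
    (@Measure.toSignedMeasure X _ μ h.1 - @Measure.toSignedMeasure X _ ν h.2).totalVariation
  else 0

/-- The weighted variational distance `ρ_β(μ, ν) = ∫ (1 + β V) d|μ - ν|`. -/
noncomputable def rhoBeta {X : Type*} [MeasurableSpace X] (β : ℝ) (V : X → ℝ)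
    (μ ν : Measure X) : ℝ≥0∞ :=
  ∫⁻ x, ENNReal.ofReal (1 + β * V x) ∂(tvMeasure μ ν)

section TotalVariation

variable {X : Type*} [MeasurableSpace X] {μ ν p q : Measure X}
  [IsFiniteMeasure μ] [IsFiniteMeasure ν] [IsFiniteMeasure p] [IsFiniteMeasure q]

lemma tvMeasure_eq_totalVariation :
    tvMeasure μ ν = (μ.toSignedMeasure - ν.toSignedMeasure).totalVariation := by
  rw [tvMeasure, dif_pos ⟨‹_›, ‹_›⟩]

lemma toSignedMeasure_sub_eq_sub_iff :
    μ.toSignedMeasure - ν.toSignedMeasure = p.toSignedMeasure - q.toSignedMeasure ↔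
      μ + q = ν + p := by
  rw [sub_eq_sub_iff_add_eq_add, add_comm p.toSignedMeasure, ← Measure.toSignedMeasure_add,
    ← Measure.toSignedMeasure_add, Measure.toSignedMeasure_eq_toSignedMeasure_iff]

lemma tvMeasure_le_add_of_add_eq_add (h : μ + q = ν + p) : tvMeasure μ ν ≤ p + q := by
  rw [tvMeasure_eq_totalVariation, toSignedMeasure_sub_eq_sub_iff.2 h,
    SignedMeasure.totalVariation_eq_variation]
  simpa using VectorMeasure.variation_sub_le (μ := p.toSignedMeasure) (ν := q.toSignedMeasure)

lemma lintegral_tvMeasure_lt_top {f : X → ℝ≥0∞} (hμ : ∫⁻ x, f x ∂μ < ∞)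
    (hν : ∫⁻ x, f x ∂ν < ∞) : ∫⁻ x, f x ∂(tvMeasure μ ν) < ∞ := by
  refine (lintegral_mono' (tvMeasure_le_add_of_add_eq_add (add_comm μ ν)) le_rfl).trans_lt ?_
  rw [lintegral_add_measure]
  exact ENNReal.add_lt_top.2 ⟨hμ, hν⟩

variable (μ ν) in
lemma exists_add_eq_add_and_tvMeasure_eq : ∃ η θ : Measure X, IsFiniteMeasure η ∧
    IsFiniteMeasure θ ∧ μ + θ = ν + η ∧ tvMeasure μ ν = η + θ := by
  set j := (μ.toSignedMeasure - ν.toSignedMeasure).toJordanDecomposition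
  refine ⟨j.posPart, j.negPart, inferInstance, inferInstance, ?_, tvMeasure_eq_totalVariation⟩
  rw [← toSignedMeasure_sub_eq_sub_iff]
  exact (SignedMeasure.toSignedMeasure_toJordanDecomposition _).symm

lemma tvMeasure_add_add_le {η θ κ : Measure X} [IsFiniteMeasure η] [IsFiniteMeasure θ]
    [IsFiniteMeasure κ] (h : μ + θ = ν + η) (hη : κ ≤ η) (hθ : κ ≤ θ) :
    tvMeasure μ ν + (κ + κ) ≤ η + θ := by
  have hηκ : η - κ + κ = η := Measure.sub_add_cancel_of_le hη
  have hθκ : θ - κ + κ = θ := Measure.sub_add_cancel_of_le hθ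
  have hsub : μ + (θ - κ) = ν + (η - κ) := by
    rw [← toSignedMeasure_sub_eq_sub_iff,
      ← add_sub_add_right_eq_sub (η - κ).toSignedMeasure _ κ.toSignedMeasure,
      ← Measure.toSignedMeasure_add, ← Measure.toSignedMeasure_add]
    simpa only [hηκ, hθκ, toSignedMeasure_sub_eq_sub_iff] using h
  calc tvMeasure μ ν + (κ + κ) ≤ (η - κ) + (θ - κ) + (κ + κ) := by
        gcongr; exact tvMeasure_le_add_of_add_eq_add hsub
    _ = (η - κ + κ) + (θ - κ + κ) := add_add_add_comm _ _ _ _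
    _ = η + θ := by rw [hηκ, hθκ]

end TotalVariation

section

variable {X : Type*} [MeasurableSpace X]

lemma lintegral_ofReal_one_add_mul {β : ℝ} (hβ : 0 ≤ β) {V : X → ℝ} (hV : Measurable V)
    (hV₀ : ∀ x, 0 ≤ V x) (ξ : Measure X) :
    ∫⁻ x, ENNReal.ofReal (1 + β * V x) ∂ξ =
      ξ Set.univ + ENNReal.ofReal β * ∫⁻ x, ENNReal.ofReal (V x) ∂ξ := by
  have h x : ENNReal.ofReal (1 + β * V x) = 1 + ENNReal.ofReal β * ENNReal.ofReal (V x) := by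
    rw [ENNReal.ofReal_add zero_le_one (mul_nonneg hβ (hV₀ x)), ENNReal.ofReal_one,
      ENNReal.ofReal_mul hβ]
  simp_rw [h]
  rw [lintegral_add_left measurable_const, lintegral_one, lintegral_const_mul _ hV.ennreal_ofReal]

lemma ofReal_mul_measure_compl_le_lintegral {V : X → ℝ} (hV : Measurable V) (R : ℝ)
    (ξ : Measure X) :
    ENNReal.ofReal R * ξ {x | V x ≤ R}ᶜ ≤ ∫⁻ x, ENNReal.ofReal (V x) ∂ξ := by
  refine le_trans ?_ (mul_meas_ge_le_lintegral hV.ennreal_ofReal (ENNReal.ofReal R))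
  gcongr
  intro x (hx : ¬V x ≤ R)
  exact ENNReal.ofReal_le_ofReal (not_le.1 hx).le

lemma lintegral_bind_le_of_drift (P : Kernel X X) {V : X → ℝ} (hV : Measurable V)
    (hV₀ : ∀ x, 0 ≤ V x) {γ K : ℝ} (hγ : 0 ≤ γ) (hK : 0 ≤ K)
    (hdrift : ∀ x, ∫⁻ y, ENNReal.ofReal (V y) ∂(P x) ≤ ENNReal.ofReal (γ * V x + K))
    (ξ : Measure X) :
    ∫⁻ x, ENNReal.ofReal (V x) ∂(ξ.bind P) ≤
      ENNReal.ofReal γ * ∫⁻ x, ENNReal.ofReal (V x) ∂ξ + ENNReal.ofReal K * ξ Set.univ := by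
  rw [Measure.lintegral_bind P.measurable.aemeasurable hV.ennreal_ofReal.aemeasurable]
  calc ∫⁻ x, ∫⁻ y, ENNReal.ofReal (V y) ∂(P x) ∂ξ
      ≤ ∫⁻ x, (ENNReal.ofReal γ * ENNReal.ofReal (V x) + ENNReal.ofReal K) ∂ξ := by
        refine lintegral_mono fun x ↦ (hdrift x).trans_eq ?_
        rw [ENNReal.ofReal_add (mul_nonneg hγ (hV₀ x)) hK, ENNReal.ofReal_mul hγ]
    _ = _ := by
        rw [lintegral_add_right _ measurable_const, lintegral_const,
          lintegral_const_mul _ hV.ennreal_ofReal]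

lemma smul_le_bind_of_minorization (P : Kernel X X) {C : Set X} {a : ℝ≥0∞} {ν : Measure X}
    (hminor : ∀ x ∈ C, ∀ A, MeasurableSet A → a * ν A ≤ P x A) {ξ : Measure X} {c : ℝ≥0∞}
    (hc : c ≤ ξ C) : (a * c) • ν ≤ ξ.bind P := by
  refine Measure.le_iff.2 fun A hA ↦ ?_
  rw [Measure.bind_apply hA P.measurable.aemeasurable, Measure.smul_apply, smul_eq_mul,
    mul_right_comm]
  calc a * ν A * c ≤ ∫⁻ _ in C, a * ν A ∂ξ := by rw [setLIntegral_const]; gcongr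
    _ ≤ ∫⁻ x in C, P x A ∂ξ := setLIntegral_mono (P.measurable_coe hA) fun x hx ↦ hminor x hx A hA
    _ ≤ ∫⁻ x, P x A ∂ξ := setLIntegral_le_lintegral _ _

lemma rhoBeta_bind_add_two_mul_le (P : Kernel X X) [IsMarkovKernel P] {β : ℝ} (hβ : 0 ≤ β)
    {V : X → ℝ} (hV₀ : ∀ x, 0 ≤ V x) {C : Set X} {a : ℝ≥0∞} {ν : Measure X}
    [IsProbabilityMeasure ν] (hminor : ∀ x ∈ C, ∀ A, MeasurableSet A → a * ν A ≤ P x A)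
    {μ₁ μ₂ η θ : Measure X} [IsFiniteMeasure μ₁] [IsFiniteMeasure μ₂] [IsFiniteMeasure η]
    [IsFiniteMeasure θ] (h : μ₁ + θ = μ₂ + η) (htv : tvMeasure μ₁ μ₂ = η + θ) :
    rhoBeta β V (μ₁.bind P) (μ₂.bind P) + 2 * (a * min (η C) (θ C)) ≤
      ∫⁻ x, ENNReal.ofReal (1 + β * V x) ∂((tvMeasure μ₁ μ₂).bind P) := by
  set g : X → ℝ≥0∞ := fun x ↦ ENNReal.ofReal (1 + β * V x)
  set κ := (a * min (η C) (θ C)) • ν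
  have hκη : κ ≤ η.bind P := smul_le_bind_of_minorization P hminor (min_le_left _ _)
  have hκθ : κ ≤ θ.bind P := smul_le_bind_of_minorization P hminor (min_le_right _ _)
  have : IsFiniteMeasure κ := isFiniteMeasure_of_le _ hκη
  have hbind : μ₁.bind P + θ.bind P = μ₂.bind P + η.bind P := by
    rw [← Measure.comp_add, ← Measure.comp_add, h]
  have hκg : κ Set.univ ≤ ∫⁻ x, g x ∂κ := by
    rw [← lintegral_one]
    exact lintegral_mono fun x ↦
      ENNReal.one_le_ofReal.2 (le_add_of_nonneg_right (mul_nonneg hβ (hV₀ x)))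
  calc rhoBeta β V (μ₁.bind P) (μ₂.bind P) + 2 * (a * min (η C) (θ C))
      = ∫⁻ x, g x ∂(tvMeasure (μ₁.bind P) (μ₂.bind P)) + (κ Set.univ + κ Set.univ) := by
        simp [rhoBeta, g, κ, two_mul]
    _ ≤ ∫⁻ x, g x ∂(tvMeasure (μ₁.bind P) (μ₂.bind P)) + (∫⁻ x, g x ∂κ + ∫⁻ x, g x ∂κ) := by
        gcongr
    _ = ∫⁻ x, g x ∂(tvMeasure (μ₁.bind P) (μ₂.bind P) + (κ + κ)) := by
        rw [lintegral_add_measure, lintegral_add_measure]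
    _ ≤ ∫⁻ x, g x ∂(η.bind P + θ.bind P) :=
        lintegral_mono' (tvMeasure_add_add_le hbind hκη hκθ) le_rfl
    _ = ∫⁻ x, g x ∂((tvMeasure μ₁ μ₂).bind P) := by rw [htv, Measure.comp_add]

lemma two_mul_min_le_measure_univ_add (η θ : Measure X) (C : Set X) :
    2 * min (η C) (θ C) ≤ (η + θ) Set.univ := by
  rw [two_mul, Measure.add_apply]
  exact add_le_add ((min_le_left _ _).trans (measure_mono (Set.subset_univ C)))
    ((min_le_right _ _).trans (measure_mono (Set.subset_univ C)))

lemma measure_univ_add_le_two_mul {η θ : Measure X} (hηθ : η Set.univ = θ Set.univ)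
    (C : Set X) : (η + θ) Set.univ ≤ 2 * (min (η C) (θ C) + (η + θ) Cᶜ) := by
  have hη : η Set.univ ≤ η C + (η + θ) Cᶜ :=
    (measure_univ_le_add_compl C).trans (by gcongr; exact Measure.le_add_right le_rfl)
  have hθ : θ Set.univ ≤ θ C + (η + θ) Cᶜ :=
    (measure_univ_le_add_compl C).trans (by gcongr; exact Measure.le_add_left le_rfl)
  rw [Measure.add_apply, ← hηθ, ← two_mul, ← min_add_add_right]
  gcongr
  exact le_min hη (hηθ ▸ hθ)

end

lemma harris_rate_lt_one {ζ ζ₀ γ₀ R β : ℝ} (hζ₀ζ : ζ₀ < ζ) (hγ₀ : γ₀ < 1) (hRβ : 0 < R * β) :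
    max (1 - (ζ - ζ₀)) ((2 + R * β * γ₀) / (2 + R * β)) < 1 := by
  refine max_lt (by linarith) ((div_lt_one (by linarith)).2 ?_)
  nlinarith

/-- Here `M = (η + θ)(X)`, `S = ∫ V d(η + θ)`, `t = (η + θ)(Cᶜ)` and `c = min (η C) (θ C)`. -/
lemma drift_bound_le_rate_mul_add {γ K R ζ ζ₀ γ₀ β ζbar M S t c : ℝ} (hK : 0 ≤ K) (hR : 0 < R)
    (hβ : 0 ≤ β) (hKβ : K * β ≤ ζ₀) (hγ₀ : γ + 2 * K / R ≤ γ₀) (hγ₀1 : γ₀ ≤ 1)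
    (hζbar₁ : 1 - (ζ - ζ₀) ≤ ζbar) (hζbar₂ : (2 + R * β * γ₀) / (2 + R * β) ≤ ζbar)
    (hc : 0 ≤ c) (hcM : 2 * c ≤ M) (hMt : M ≤ 2 * (c + t)) (hRt : R * t ≤ S) :
    M + β * (γ * S + K * M) ≤ ζbar * (M + β * S) + 2 * ζ * c := by
  have hRβ : 0 < 2 + R * β := by positivity
  have hγ₀R : γ * R + 2 * K ≤ γ₀ * R := by
    have := mul_le_mul_of_nonneg_right hγ₀ hR.le
    rwa [add_mul, div_mul_cancel₀ _ hR.ne'] at this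
  have hζbar₂' : 2 + R * β * γ₀ ≤ ζbar * (2 + R * β) := (div_le_iff₀ hRβ).1 hζbar₂
  have hγγ₀ : γ ≤ γ₀ := le_of_mul_le_mul_right (by linarith) hR
  have hγ₀ζbar : γ₀ ≤ ζbar := le_of_mul_le_mul_right (by nlinarith) hRβ
  -- `M / 2 - c = max (η Cᶜ) (θ Cᶜ)` is the mass that the coupling cannot use
  have h₁ : 0 ≤ β * (ζbar - γ) * (S - R * (M / 2 - c)) :=
    mul_nonneg (mul_nonneg hβ (by linarith)) (by nlinarith)
  have h₂ : 0 ≤ (M / 2 - c) * (ζbar * (2 + R * β) - 2 - 2 * K * β - β * γ * R) := by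
    apply mul_nonneg <;> nlinarith
  have h₃ : 0 ≤ c * (2 * ζbar - 2 + 2 * ζ - 2 * K * β) := mul_nonneg hc (by linarith)
  linear_combination h₁ + h₂ + h₃

lemma le_ofReal_rate_mul_of_drift_bound {γ K R ζ ζ₀ γ₀ β ζbar : ℝ} (hγ : 0 ≤ γ) (hK : 0 ≤ K)
    (hR : 0 < R) (hβ : 0 ≤ β) (hζ : 0 ≤ ζ) (hKβ : K * β ≤ ζ₀) (hγ₀ : γ + 2 * K / R ≤ γ₀)
    (hγ₀1 : γ₀ ≤ 1) (hζbar₁ : 1 - (ζ - ζ₀) ≤ ζbar)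
    (hζbar₂ : (2 + R * β * γ₀) / (2 + R * β) ≤ ζbar) {a M S t c : ℝ≥0∞} (hM : M ≠ ∞)
    (hS : S ≠ ∞) (ha : a + 2 * (ENNReal.ofReal ζ * c) ≤
      M + ENNReal.ofReal β * (ENNReal.ofReal γ * S + ENNReal.ofReal K * M))
    (hcM : 2 * c ≤ M) (hMt : M ≤ 2 * (c + t)) (hRt : ENNReal.ofReal R * t ≤ S) :
    a ≤ ENNReal.ofReal ζbar * (M + ENNReal.ofReal β * S) := by
  have ht : t ≠ ∞ := by
    rintro rfl
    rw [ENNReal.mul_top (by simpa using hR), top_le_iff] at hRt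
    exact hS hRt
  have hc : c ≠ ∞ := by
    rintro rfl
    rw [ENNReal.mul_top two_ne_zero, top_le_iff] at hcM
    exact hM hcM
  lift a to NNReal using ne_top_of_le_ne_top (by finiteness) (le_self_add.trans ha)
  lift M to NNReal using hM
  lift S to NNReal using hS
  lift t to NNReal using ht
  lift c to NNReal using hc
  simp only [ENNReal.ofReal] at *
  norm_cast at *
  rw [← NNReal.coe_le_coe] at *
  push_cast [Real.coe_toNNReal _ hR.le, Real.coe_toNNReal _ hβ, Real.coe_toNNReal _ hγ,
    Real.coe_toNNReal _ hK, Real.coe_toNNReal _ hζ] at *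
  calc (a : ℝ) ≤ ζbar * (M + β * S) := by
        linarith [drift_bound_le_rate_mul_add hK hR hβ hKβ hγ₀ hγ₀1 hζbar₁ hζbar₂ c.coe_nonneg
          hcM hMt hRt]
    _ ≤ max ζbar 0 * (M + β * S) := by gcongr; exact le_max_left _ _

theorem hairer_mattingly_contraction_general
    {X : Type*} [MeasurableSpace X]
    (P : Kernel X X) [IsMarkovKernel P]
    (V : X → ℝ) (hVmeas : Measurable V) (hVnonneg : ∀ x, 0 ≤ V x)
    (γ K : ℝ) (hγ : γ ∈ Set.Ioo (0:ℝ) 1) (hK : 0 < K)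
    (hdrift : ∀ x, ∫⁻ y, ENNReal.ofReal (V y) ∂(P x) ≤ ENNReal.ofReal (γ * V x + K))
    (R : ℝ) (hR : 2 * K / (1 - γ) < R)
    (ζ : ℝ)
    (ν : Measure X) [IsProbabilityMeasure ν]
    (hminor : ∀ x, V x ≤ R → ∀ A : Set X, MeasurableSet A →
      ENNReal.ofReal ζ * ν A ≤ (P x) A)
    (ζ₀ : ℝ) (hζ₀ : ζ₀ ∈ Set.Ioo 0 ζ)
    (γ₀ : ℝ) (hγ₀ : γ₀ ∈ Set.Ioo (γ + 2 * K / R) 1)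
    (β : ℝ) (hβ : β = ζ₀ / K)
    (ζbar : ℝ) (hζbar : ζbar = max (1 - (ζ - ζ₀)) ((2 + R * β * γ₀) / (2 + R * β)))
    (μ₁ μ₂ : Measure X) [IsProbabilityMeasure μ₁] [IsProbabilityMeasure μ₂]
    (h₁ : ∫⁻ x, ENNReal.ofReal (V x) ∂μ₁ < ⊤)
    (h₂ : ∫⁻ x, ENNReal.ofReal (V x) ∂μ₂ < ⊤) :
    ζbar < 1 ∧
      rhoBeta β V (μ₁.bind (fun x => P x)) (μ₂.bind (fun x => P x)) ≤
        ENNReal.ofReal ζbar * rhoBeta β V μ₁ μ₂ := by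
  obtain ⟨hγ0, hγ1⟩ := hγ
  obtain ⟨hζ₀0, hζ₀ζ⟩ := hζ₀
  obtain ⟨hγ₀l, hγ₀1⟩ := hγ₀
  have hR0 : 0 < R := (div_pos (by positivity) (by linarith)).trans hR
  have hβ0 : 0 < β := hβ ▸ div_pos hζ₀0 hK
  refine ⟨hζbar ▸ harris_rate_lt_one hζ₀ζ hγ₀1 (by positivity), ?_⟩
  obtain ⟨η, θ, _, _, hadd, htv⟩ := exists_add_eq_add_and_tvMeasure_eq μ₁ μ₂
  have hηθ : η Set.univ = θ Set.univ := by
    simpa [measure_univ] using (congrArg (· Set.univ) hadd).symm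
  set ξ := tvMeasure μ₁ μ₂
  set C := {x | V x ≤ R}
  have hstep : rhoBeta β V (μ₁.bind P) (μ₂.bind P) + 2 * (ENNReal.ofReal ζ * min (η C) (θ C)) ≤
      ξ Set.univ + ENNReal.ofReal β *
        (ENNReal.ofReal γ * ∫⁻ x, ENNReal.ofReal (V x) ∂ξ + ENNReal.ofReal K * ξ Set.univ) := by
    calc _ ≤ ∫⁻ x, ENNReal.ofReal (1 + β * V x) ∂(ξ.bind P) :=
          rhoBeta_bind_add_two_mul_le P hβ0.le hVnonneg (C := C) hminor hadd htv
      _ = ξ Set.univ + ENNReal.ofReal β * ∫⁻ x, ENNReal.ofReal (V x) ∂(ξ.bind P) := by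
          rw [lintegral_ofReal_one_add_mul hβ0.le hVmeas hVnonneg, Measure.comp_apply_univ]
      _ ≤ _ := by gcongr; exact lintegral_bind_le_of_drift P hVmeas hVnonneg hγ0.le hK.le hdrift ξ
  have hρ : rhoBeta β V μ₁ μ₂ = ξ Set.univ + ENNReal.ofReal β * ∫⁻ x, ENNReal.ofReal (V x) ∂ξ :=
    lintegral_ofReal_one_add_mul hβ0.le hVmeas hVnonneg ξ
  rw [hρ]
  exact le_ofReal_rate_mul_of_drift_bound hγ0.le hK.le hR0 hβ0.le (hζ₀0.trans hζ₀ζ).le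
    (by rw [hβ, mul_div_cancel₀ _ hK.ne']) hγ₀l.le hγ₀1.le (hζbar ▸ le_max_left _ _)
    (hζbar ▸ le_max_right _ _) (by rw [htv]; finiteness) (lintegral_tvMeasure_lt_top h₁ h₂).ne
    hstep (htv ▸ two_mul_min_le_measure_univ_add η θ C) (htv ▸ measure_univ_add_le_two_mul hηθ C)
    (ofReal_mul_measure_compl_le_lintegral hVmeas R ξ)

/-- Hairer–Mattingly Harris-type contraction theorem. -/
theorem hairer_mattingly_contraction
    {X : Type*} [MeasurableSpace X]
    (P : Kernel X X) [IsMarkovKernel P]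
    (V : X → ℝ) (hVmeas : Measurable V) (hVnonneg : ∀ x, 0 ≤ V x)
    (γ K : ℝ) (hγ : γ ∈ Set.Ioo (0:ℝ) 1) (hK : 0 < K)
    (hdrift : ∀ x, ∫⁻ y, ENNReal.ofReal (V y) ∂(P x) ≤ ENNReal.ofReal (γ * V x + K))
    (R : ℝ) (hR : 2 * K / (1 - γ) < R)
    (ζ : ℝ) (hζ : ζ ∈ Set.Ioo (0:ℝ) 1)
    (ν : Measure X) [IsProbabilityMeasure ν]
    (hminor : ∀ x, V x ≤ R → ∀ A : Set X, MeasurableSet A →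
      ENNReal.ofReal ζ * ν A ≤ (P x) A)
    (ζ₀ : ℝ) (hζ₀ : ζ₀ ∈ Set.Ioo 0 ζ)
    (γ₀ : ℝ) (hγ₀ : γ₀ ∈ Set.Ioo (γ + 2 * K / R) 1)
    (β : ℝ) (hβ : β = ζ₀ / K)
    (ζbar : ℝ) (hζbar : ζbar = max (1 - (ζ - ζ₀)) ((2 + R * β * γ₀) / (2 + R * β)))
    (μ₁ μ₂ : Measure X) [IsProbabilityMeasure μ₁] [IsProbabilityMeasure μ₂]
    (h₁ : ∫⁻ x, ENNReal.ofReal (V x) ∂μ₁ < ⊤)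
    (h₂ : ∫⁻ x, ENNReal.ofReal (V x) ∂μ₂ < ⊤) :
    ζbar < 1 ∧
      rhoBeta β V (μ₁.bind (fun x => P x)) (μ₂.bind (fun x => P x)) ≤
        ENNReal.ofReal ζbar * rhoBeta β V μ₁ μ₂ :=
  hairer_mattingly_contraction_general P V hVmeas hVnonneg γ K hγ hK hdrift R hR ζ ν hminor ζ₀ hζ₀
    γ₀ hγ₀ β hβ ζbar hζbar μ₁ μ₂ h₁ h₂
end

section
/- Let P be a Markov kernel on a measurable space X, V : X → [0,∞) measurable, γ ∈ (0,1), K > 0 with ∫ V(y) P(x,dy) ≤ γ·V(x) + K for all x; let R > 2K/(1−γ), C = {V ≤ R}, and suppose P(x,·) ≥ ζ·ν for all x ∈ C, for some ζ ∈ (0,1) and probability measure ν. Fix ζ₀ ∈ (0,ζ), γ₀ ∈ (γ + 2K/R, 1), β = ζ₀/K and ζ̄ = max(1 − (ζ − ζ₀), (2 + Rβγ₀)/(2 + Rβ)). If π is a P-invariant probability measure (πP = π) with ∫V dπ < ∞, then for every probability measure μ with ∫V dμ < ∞ and every n ∈ ℕ, the total variation norm satisfies ‖μPⁿ − π‖ ≤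 ρ_β(μPⁿ, π) ≤ ζ̄ⁿ · ρ_β(μ, π), where Pⁿ denotes the n-fold iterate of the kernel acting on measures. -/
open MeasureTheory ProbabilityTheory ENNReal

/-- The `n`-fold action of a Markov kernel on a measure: `μ Pⁿ`. -/
noncomputable def kernelIter {X : Type*} [MeasurableSpace X] (P : Kernel X X)
    (μ : Measure X) (n : ℕ) : Measure X :=
  (fun ν : Measure X => ν.bind (fun x => P x))^[n] μ

/-!
With the weight `g = 1 + β V`, the drift condition reads `∫ g dP(x) ≤ 1 + β (γ V x + K)`.
Write `μ₁ - μ₂ = ξ₁ - ξ₂` (Jordan decomposition) and couple `ξ₁`, `ξ₂` by their normalised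
product `Γ`. For every pair `(x, y)`, the measures `P x` and `P y` differ by at most
`D(x, y) = (P x - r ν) + (P y - r ν)`, where `r = ζ` when both points lie in the small set
`{V ≤ R}` and `r = 0` otherwise, so `|μ₁ P - μ₂ P| ≤ ∫ D dΓ`. The one-step contraction then
reduces to the pointwise bound `∫ g dD(x, y) ≤ ζbar (g x + g y)`: on the small set the
minorisation removes mass `2ζ`, which pays for the constant `2 β K = 2 ζ₀`; off it,
`V x + V y > R` and the drift gains the factor `γ₀`. Iterating from the fixed point `π`
gives the geometric rate.
-/

lemma enorm_toReal_sub_le {a b c : ℝ≥0∞} (ha : a ≠ ⊤) (hb : b ≠ ⊤) (hab : a ≤ b + c)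
    (hba : b ≤ a + c) : ‖a.toReal - b.toReal‖ₑ ≤ c := by
  rcases le_total a b with h | h
  · rw [← enorm_neg, neg_sub, ← ENNReal.toReal_sub_of_le h hb, Real.enorm_of_nonneg toReal_nonneg,
      ofReal_toReal (by finiteness)]
    exact tsub_le_iff_left.2 hba
  · rw [← ENNReal.toReal_sub_of_le h ha, Real.enorm_of_nonneg toReal_nonneg,
      ofReal_toReal (by finiteness)]
    exact tsub_le_iff_left.2 hab

lemma le_ofReal_of_add_ofReal_le {a : ℝ≥0∞} {s t u : ℝ} (ht : 0 ≤ t)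
    (h : a + ENNReal.ofReal t ≤ ENNReal.ofReal s) (hstu : s - t ≤ u) : a ≤ ENNReal.ofReal u :=
  calc a ≤ ENNReal.ofReal s - ENNReal.ofReal t :=
        ENNReal.le_sub_of_add_le_right ofReal_ne_top h
    _ = ENNReal.ofReal (s - t) := (ofReal_sub s ht).symm
    _ ≤ ENNReal.ofReal u := ofReal_le_ofReal hstu

section TotalVariation

variable {X : Type*} [MeasurableSpace X]

lemma tvMeasure_eq (μ ν : Measure X) [IsFiniteMeasure μ] [IsFiniteMeasure ν] :
    tvMeasure μ ν = (μ.toSignedMeasure - ν.toSignedMeasure).totalVariation := by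
  rw [tvMeasure, dif_pos ⟨‹_›, ‹_›⟩]

lemma tvMeasure_add_right (μ ν ξ : Measure X) [IsFiniteMeasure μ] [IsFiniteMeasure ν]
    [IsFiniteMeasure ξ] : tvMeasure (μ + ξ) (ν + ξ) = tvMeasure μ ν := by
  rw [tvMeasure_eq, tvMeasure_eq, Measure.toSignedMeasure_add, Measure.toSignedMeasure_add,
    add_sub_add_right_eq_sub]

lemma tvMeasure_add_left (ξ μ ν : Measure X) [IsFiniteMeasure μ] [IsFiniteMeasure ν]
    [IsFiniteMeasure ξ] : tvMeasure (ξ + μ) (ξ + ν) = tvMeasure μ ν := by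
  rw [add_comm ξ, add_comm ξ, tvMeasure_add_right]

lemma exists_add_eq_add_tvMeasure_eq (μ ν : Measure X) [IsFiniteMeasure μ] [IsFiniteMeasure ν] :
    ∃ ξ₁ ξ₂ : Measure X, IsFiniteMeasure ξ₁ ∧ IsFiniteMeasure ξ₂ ∧
      μ + ξ₂ = ν + ξ₁ ∧ tvMeasure μ ν = ξ₁ + ξ₂ := by
  set j := (μ.toSignedMeasure - ν.toSignedMeasure).toJordanDecomposition
  refine ⟨j.posPart, j.negPart, inferInstance, inferInstance, ?_, tvMeasure_eq μ ν⟩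
  have hj : μ.toSignedMeasure - ν.toSignedMeasure =
      j.posPart.toSignedMeasure - j.negPart.toSignedMeasure :=
    (SignedMeasure.toSignedMeasure_toJordanDecomposition _).symm
  rw [← Measure.toSignedMeasure_eq_toSignedMeasure_iff, Measure.toSignedMeasure_add,
    Measure.toSignedMeasure_add]
  exact (sub_eq_sub_iff_add_eq_add.1 hj).trans (add_comm _ _)

lemma tvMeasure_le_of_le_add {μ ν l : Measure X} [IsFiniteMeasure μ] [IsFiniteMeasure ν]
    (hμ : μ ≤ ν + l) (hν : ν ≤ μ + l) : tvMeasure μ ν ≤ l := by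
  rw [tvMeasure_eq, SignedMeasure.totalVariation_eq_variation]
  refine VectorMeasure.variation_le_of_forall_enorm_le fun A hA => ?_
  rw [sub_apply, Measure.toSignedMeasure_apply_measurable hA,
    Measure.toSignedMeasure_apply_measurable hA]
  exact enorm_toReal_sub_le (measure_ne_top μ A) (measure_ne_top ν A) (hμ A) (hν A)

end TotalVariation

section Coupling

variable {X Y Z : Type*} [MeasurableSpace X] [MeasurableSpace Y] [MeasurableSpace Z]

lemma exists_map_fst_eq_map_snd_eq (a : Measure X) (b : Measure Y) [IsFiniteMeasure a]
    [IsFiniteMeasure b] (hab : a Set.univ = b Set.univ) :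
    ∃ Γ : Measure (X × Y), Γ.map Prod.fst = a ∧ Γ.map Prod.snd = b := by
  rcases eq_or_ne (a Set.univ) 0 with h0 | h0
  · refine ⟨0, ?_, ?_⟩
    · simp [Measure.measure_univ_eq_zero.1 h0]
    · simp [Measure.measure_univ_eq_zero.1 (hab ▸ h0)]
  · refine ⟨(a Set.univ)⁻¹ • a.prod b, ?_, ?_⟩
    · rw [Measure.map_smul, Measure.map_fst_prod, smul_smul, ← hab,
        ENNReal.inv_mul_cancel h0 (measure_ne_top _ _), one_smul]
    · rw [Measure.map_smul, Measure.map_snd_prod, smul_smul,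
        ENNReal.inv_mul_cancel h0 (measure_ne_top _ _), one_smul]

lemma bind_comp_eq_bind_map {Γ : Measure X} {f : X → Y} (hf : Measurable f) {κ : Y → Measure Z}
    (hκ : Measurable κ) : (κ ∘ f) ∘ₘ Γ = κ ∘ₘ Γ.map f := by
  rw [Measure.bind, Measure.bind, Measure.map_map hκ hf]

lemma bind_le_bind_add {Γ : Measure X} {κ₁ κ₂ D : X → Measure Y} (hκ₂ : Measurable κ₂)
    (hD : Measurable D) (h : ∀ p, κ₁ p ≤ κ₂ p + D p) : κ₁ ∘ₘ Γ ≤ κ₂ ∘ₘ Γ + D ∘ₘ Γ := by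
  refine Measure.le_iff.2 fun A hA => ?_
  rw [Measure.add_apply, Measure.bind_apply hA hκ₂.aemeasurable,
    Measure.bind_apply hA hD.aemeasurable,
    ← lintegral_add_left (Measure.measurable_measure.1 hκ₂ A hA)]
  exact (Measure.bind_apply_le _ hA).trans (lintegral_mono fun p => h p A)

variable {P : Kernel X X} [IsFiniteKernel P] {D : X × X → Measure X} {g : X → ℝ≥0∞} {c : ℝ≥0∞}

theorem lintegral_tvMeasure_comp_le_of_mass_eq (hD : Measurable D)
    (hPD : ∀ p, P p.1 ≤ P p.2 + D p ∧ P p.2 ≤ P p.1 + D p) (hg : Measurable g)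
    (hDg : ∀ p, ∫⁻ x, g x ∂D p ≤ c * (g p.1 + g p.2)) {a b : Measure X} [IsFiniteMeasure a]
    [IsFiniteMeasure b] (hab : a Set.univ = b Set.univ) :
    ∫⁻ x, g x ∂tvMeasure (P ∘ₘ a) (P ∘ₘ b) ≤ c * (∫⁻ x, g x ∂a + ∫⁻ x, g x ∂b) := by
  obtain ⟨Γ, hΓa, hΓb⟩ := exists_map_fst_eq_map_snd_eq a b hab
  have hPa : P ∘ₘ a = (P ∘ Prod.fst) ∘ₘ Γ := by
    rw [bind_comp_eq_bind_map measurable_fst P.measurable, hΓa]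
  have hPb : P ∘ₘ b = (P ∘ Prod.snd) ∘ₘ Γ := by
    rw [bind_comp_eq_bind_map measurable_snd P.measurable, hΓb]
  have htv : tvMeasure (P ∘ₘ a) (P ∘ₘ b) ≤ D ∘ₘ Γ := by
    refine tvMeasure_le_of_le_add ?_ ?_ <;> rw [hPa, hPb]
    · exact bind_le_bind_add (P.measurable.comp measurable_snd) hD fun p => (hPD p).1
    · exact bind_le_bind_add (P.measurable.comp measurable_fst) hD fun p => (hPD p).2
  calc ∫⁻ x, g x ∂tvMeasure (P ∘ₘ a) (P ∘ₘ b) ≤ ∫⁻ x, g x ∂(D ∘ₘ Γ) := lintegral_mono' htv le_rfl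
    _ = ∫⁻ p, ∫⁻ x, g x ∂D p ∂Γ := Measure.lintegral_bind hD.aemeasurable hg.aemeasurable
    _ ≤ ∫⁻ p, c * (g p.1 + g p.2) ∂Γ := lintegral_mono hDg
    _ = c * (∫⁻ p, g p.1 ∂Γ + ∫⁻ p, g p.2 ∂Γ) := by
      rw [lintegral_const_mul _ (by fun_prop), lintegral_add_left (by fun_prop)]
    _ = c * (∫⁻ x, g x ∂a + ∫⁻ x, g x ∂b) := by
      rw [← hΓa, ← hΓb, lintegral_map hg measurable_fst, lintegral_map hg measurable_snd]

theorem lintegral_tvMeasure_comp_le (hD : Measurable D)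
    (hPD : ∀ p, P p.1 ≤ P p.2 + D p ∧ P p.2 ≤ P p.1 + D p) (hg : Measurable g)
    (hDg : ∀ p, ∫⁻ x, g x ∂D p ≤ c * (g p.1 + g p.2)) {μ₁ μ₂ : Measure X} [IsFiniteMeasure μ₁]
    [IsFiniteMeasure μ₂] (hμ : μ₁ Set.univ = μ₂ Set.univ) :
    ∫⁻ x, g x ∂tvMeasure (P ∘ₘ μ₁) (P ∘ₘ μ₂) ≤ c * ∫⁻ x, g x ∂tvMeasure μ₁ μ₂ := by
  obtain ⟨ξ₁, ξ₂, _, _, hbal, htv⟩ := exists_add_eq_add_tvMeasure_eq μ₁ μ₂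
  have hmass : ξ₁ Set.univ = ξ₂ Set.univ := by
    have h := congrArg (· Set.univ) hbal
    simp only [Measure.add_apply, hμ] at h
    exact ((ENNReal.add_right_inj (measure_ne_top _ _)).1 h).symm
  have hPtv : tvMeasure (P ∘ₘ μ₁) (P ∘ₘ μ₂) = tvMeasure (P ∘ₘ ξ₁) (P ∘ₘ ξ₂) := by
    rw [← tvMeasure_add_right (P ∘ₘ μ₁) (P ∘ₘ μ₂) (P ∘ₘ ξ₂), ← Measure.comp_add, hbal,
      Measure.comp_add, tvMeasure_add_left]
  rw [hPtv, htv, lintegral_add_measure]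
  exact lintegral_tvMeasure_comp_le_of_mass_eq hD hPD hg hDg hmass

end Coupling

section Minorization

variable {X : Type*} [MeasurableSpace X]

noncomputable def residualPair (P : Kernel X X) (ν : Measure X) (r : X × X → ℝ≥0∞)
    (p : X × X) : Measure X :=
  (P p.1 - r p • ν) + (P p.2 - r p • ν)

variable {P : Kernel X X} [IsFiniteKernel P] {ν : Measure X} {r : X × X → ℝ≥0∞}

lemma measurable_residualPair (hr : Measurable r)
    (hrP : ∀ p, r p • ν ≤ P p.1 ∧ r p • ν ≤ P p.2) : Measurable (residualPair P ν r) := by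
  refine Measure.measurable_of_measurable_coe _ fun A hA => ?_
  have hfin (p : X × X) : IsFiniteMeasure (r p • ν) := isFiniteMeasure_of_le _ (hrP p).1
  have happly (p : X × X) :
      residualPair P ν r p A = (P p.1 A - r p * ν A) + (P p.2 A - r p * ν A) := by
    rw [residualPair, Measure.add_apply, Measure.sub_apply hA (hrP p).1,
      Measure.sub_apply hA (hrP p).2, Measure.smul_apply, smul_eq_mul]
  simp_rw [happly]
  have hPA := P.measurable_coe hA
  exact ((hPA.comp measurable_fst).sub (hr.mul_const _)).add
    ((hPA.comp measurable_snd).sub (hr.mul_const _))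

lemma le_add_residualPair (hrP : ∀ p, r p • ν ≤ P p.1 ∧ r p • ν ≤ P p.2) (p : X × X) :
    P p.1 ≤ P p.2 + residualPair P ν r p ∧ P p.2 ≤ P p.1 + residualPair P ν r p := by
  have hfin : IsFiniteMeasure (r p • ν) := isFiniteMeasure_of_le _ (hrP p).1
  constructor
  · calc P p.1 = (P p.1 - r p • ν) + r p • ν := (Measure.sub_add_cancel_of_le (hrP p).1).symm
      _ ≤ (P p.1 - r p • ν) + P p.2 := add_le_add le_rfl (hrP p).2
      _ ≤ P p.2 + residualPair P ν r p := by
        rw [add_comm, residualPair]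
        exact add_le_add le_rfl (Measure.le_add_right le_rfl)
  · calc P p.2 = (P p.2 - r p • ν) + r p • ν := (Measure.sub_add_cancel_of_le (hrP p).2).symm
      _ ≤ (P p.2 - r p • ν) + P p.1 := add_le_add le_rfl (hrP p).1
      _ ≤ P p.1 + residualPair P ν r p := by
        rw [add_comm, residualPair]
        exact add_le_add le_rfl (Measure.le_add_left le_rfl)

end Minorization

section HairerMattingly

variable {X : Type*} [MeasurableSpace X]

noncomputable def couplingMass (V : X → ℝ) (R ζ : ℝ) : X × X → ℝ≥0∞ :=
  ({x | V x ≤ R} ×ˢ {x | V x ≤ R}).indicator fun _ => ENNReal.ofReal ζ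

lemma measurable_couplingMass {V : X → ℝ} (hV : Measurable V) (R ζ : ℝ) :
    Measurable (couplingMass V R ζ) := by
  have hC : MeasurableSet {x | V x ≤ R} := measurableSet_le hV measurable_const
  exact measurable_const.indicator (hC.prod hC)

lemma couplingMass_smul_le {P : Kernel X X} {ν : Measure X} {V : X → ℝ} {R ζ : ℝ}
    (hminor : ∀ x, V x ≤ R → ∀ A : Set X, MeasurableSet A → ENNReal.ofReal ζ * ν A ≤ P x A)
    (p : X × X) : couplingMass V R ζ p • ν ≤ P p.1 ∧ couplingMass V R ζ p • ν ≤ P p.2 := by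
  by_cases hp : p ∈ {x | V x ≤ R} ×ˢ {x | V x ≤ R}
  · rw [couplingMass, Set.indicator_of_mem hp]
    exact ⟨Measure.le_iff.2 (hminor p.1 hp.1), Measure.le_iff.2 (hminor p.2 hp.2)⟩
  · rw [couplingMass, Set.indicator_of_notMem hp, zero_smul]
    exact ⟨Measure.zero_le _, Measure.zero_le _⟩

lemma lintegral_ofReal_one_add_mul_le {μ : Measure X} [IsProbabilityMeasure μ] {V : X → ℝ}
    (hV : Measurable V) {β s : ℝ} (hβ : 0 ≤ β) (hs : 0 ≤ s)
    (h : ∫⁻ x, ENNReal.ofReal (V x) ∂μ ≤ ENNReal.ofReal s) :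
    ∫⁻ x, ENNReal.ofReal (1 + β * V x) ∂μ ≤ ENNReal.ofReal (1 + β * s) := by
  calc ∫⁻ x, ENNReal.ofReal (1 + β * V x) ∂μ
      ≤ ∫⁻ x, (1 + ENNReal.ofReal β * ENNReal.ofReal (V x)) ∂μ := by
        refine lintegral_mono fun x => ofReal_add_le.trans ?_
        rw [ofReal_one, ofReal_mul hβ]
    _ = 1 + ENNReal.ofReal β * ∫⁻ x, ENNReal.ofReal (V x) ∂μ := by
        rw [lintegral_add_left measurable_const, lintegral_const, measure_univ, mul_one,
          lintegral_const_mul _ hV.ennreal_ofReal]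
    _ ≤ 1 + ENNReal.ofReal β * ENNReal.ofReal s := by gcongr
    _ = ENNReal.ofReal (1 + β * s) := by
        rw [ofReal_add zero_le_one (by positivity), ofReal_one, ofReal_mul hβ]

lemma pair_drift_sub_le {β γ K ζ ζ₀ ζbar S : ℝ} (hβ : 0 ≤ β) (hβK : β * K = ζ₀)
    (hγ : γ ≤ ζbar) (hζ : 1 - (ζ - ζ₀) ≤ ζbar) (hS : 0 ≤ S) :
    2 + β * (γ * S + 2 * K) - 2 * ζ ≤ ζbar * (2 + β * S) := by
  nlinarith [mul_nonneg (mul_nonneg hβ hS) (sub_nonneg.2 hγ)]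

lemma pair_drift_le_of_le {β γ γ₀ K R ζbar S : ℝ} (hR : 0 < R) (hβ : 0 ≤ β) (hK : 0 ≤ K)
    (hγ₀ : γ + 2 * K / R < γ₀) (hγ₀1 : γ₀ ≤ 1) (hζbar : (2 + R * β * γ₀) / (2 + R * β) ≤ ζbar)
    (hS : R ≤ S) : 2 + β * (γ * S + 2 * K) ≤ ζbar * (2 + β * S) := by
  have h2K : 2 * K ≤ (γ₀ - γ) * R := by
    rw [← div_le_iff₀ hR]
    linarith
  have hγγ₀ : 0 ≤ γ₀ - γ := by
    have : 0 ≤ 2 * K / R := by positivity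
    linarith
  have hγ₀S : γ * S + 2 * K ≤ γ₀ * S := by nlinarith [mul_le_mul_of_nonneg_left hS hγγ₀]
  have hq : 2 + β * (γ₀ * S) ≤ (2 + R * β * γ₀) / (2 + R * β) * (2 + β * S) := by
    rw [div_mul_eq_mul_div, le_div_iff₀ (by positivity)]
    nlinarith [mul_nonneg (mul_nonneg hβ (sub_nonneg.2 hγ₀1)) (sub_nonneg.2 hS)]
  calc 2 + β * (γ * S + 2 * K) ≤ 2 + β * (γ₀ * S) := by gcongr
    _ ≤ (2 + R * β * γ₀) / (2 + R * β) * (2 + β * S) := hq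
    _ ≤ ζbar * (2 + β * S) := by
      have : 0 ≤ 2 + β * S := by nlinarith
      gcongr

lemma lintegral_residualPair_couplingMass_le {P : Kernel X X} [IsMarkovKernel P] {ν : Measure X}
    [IsProbabilityMeasure ν] {V : X → ℝ} (hV : Measurable V) (hV0 : ∀ x, 0 ≤ V x)
    {β γ K R ζ ζbar : ℝ} (hβ : 0 ≤ β) (hγ : 0 ≤ γ) (hK : 0 ≤ K) (hζ : 0 ≤ ζ) (hζbar : 0 ≤ ζbar)
    (hdrift : ∀ x, ∫⁻ y, ENNReal.ofReal (V y) ∂(P x) ≤ ENNReal.ofReal (γ * V x + K))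
    (hminor : ∀ x, V x ≤ R → ∀ A : Set X, MeasurableSet A → ENNReal.ofReal ζ * ν A ≤ P x A)
    (hin : ∀ S, 0 ≤ S → 2 + β * (γ * S + 2 * K) - 2 * ζ ≤ ζbar * (2 + β * S))
    (hout : ∀ S, R ≤ S → 2 + β * (γ * S + 2 * K) ≤ ζbar * (2 + β * S)) (p : X × X) :
    ∫⁻ z, ENNReal.ofReal (1 + β * V z) ∂residualPair P ν (couplingMass V R ζ) p ≤
      ENNReal.ofReal ζbar * (ENNReal.ofReal (1 + β * V p.1) + ENNReal.ofReal (1 + β * V p.2)) := by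
  set r := couplingMass V R ζ
  set g : X → ℝ≥0∞ := fun x => ENNReal.ofReal (1 + β * V x)
  have hW (x : X) : 0 ≤ β * V x := mul_nonneg hβ (hV0 x)
  have hD (x : X) : 0 ≤ β * (γ * V x + K) := mul_nonneg hβ (by nlinarith [hV0 x])
  have hrP := couplingMass_smul_le hminor p
  have : IsFiniteMeasure (r p • ν) := isFiniteMeasure_of_le _ hrP.1
  have hgν : 1 ≤ ∫⁻ z, g z ∂ν :=
    calc (1 : ℝ≥0∞) = ∫⁻ _, 1 ∂ν := by simp
      _ ≤ ∫⁻ z, g z ∂ν := lintegral_mono fun z => one_le_ofReal.2 (by linarith [hW z])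
  have hstep (x : X) (hx : r p • ν ≤ P x) :
      ∫⁻ z, g z ∂(P x - r p • ν) + r p ≤ ENNReal.ofReal (1 + β * (γ * V x + K)) :=
    calc ∫⁻ z, g z ∂(P x - r p • ν) + r p
        ≤ ∫⁻ z, g z ∂(P x - r p • ν) + ∫⁻ z, g z ∂(r p • ν) := by
          rw [lintegral_smul_measure, smul_eq_mul]
          gcongr
          exact le_mul_of_one_le_right' hgν
      _ = ∫⁻ z, g z ∂(P x) := by rw [← lintegral_add_measure, Measure.sub_add_cancel_of_le hx]
      _ ≤ _ := lintegral_ofReal_one_add_mul_le hV hβ (by nlinarith [hV0 x]) (hdrift x)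
  obtain ⟨t, ht0, hrt, hreal⟩ : ∃ t, 0 ≤ t ∧ r p = ENNReal.ofReal t ∧
      (1 + β * (γ * V p.1 + K)) + (1 + β * (γ * V p.2 + K)) - (t + t) ≤
        ζbar * ((1 + β * V p.1) + (1 + β * V p.2)) := by
    by_cases hp : p ∈ {x | V x ≤ R} ×ˢ {x | V x ≤ R}
    · refine ⟨ζ, hζ, Set.indicator_of_mem hp _, ?_⟩
      linarith [hin (V p.1 + V p.2) (add_nonneg (hV0 _) (hV0 _))]
    · refine ⟨0, le_rfl, by rw [ofReal_zero]; exact Set.indicator_of_notMem hp _, ?_⟩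
      have hS : R ≤ V p.1 + V p.2 := by
        simp only [Set.mem_prod, Set.mem_ofPred_eq, not_and_or, not_le] at hp
        rcases hp with h | h <;> linarith [hV0 p.1, hV0 p.2]
      linarith [hout _ hS]
  refine (le_ofReal_of_add_ofReal_le (add_nonneg ht0 ht0) ?_ hreal).trans_eq ?_
  · calc ∫⁻ z, g z ∂residualPair P ν r p + ENNReal.ofReal (t + t)
        = (∫⁻ z, g z ∂(P p.1 - r p • ν) + r p) + (∫⁻ z, g z ∂(P p.2 - r p • ν) + r p) := by
          rw [residualPair, lintegral_add_measure, ofReal_add ht0 ht0, hrt]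
          ring
      _ ≤ ENNReal.ofReal (1 + β * (γ * V p.1 + K)) + ENNReal.ofReal (1 + β * (γ * V p.2 + K)) :=
          add_le_add (hstep _ hrP.1) (hstep _ hrP.2)
      _ = _ := (ofReal_add (by linarith [hD p.1]) (by linarith [hD p.2])).symm
  · rw [ofReal_mul hζbar, ofReal_add (by linarith [hW p.1]) (by linarith [hW p.2])]

theorem rhoBeta_comp_le {P : Kernel X X} [IsMarkovKernel P] {V : X → ℝ} (hV : Measurable V)
    (hV0 : ∀ x, 0 ≤ V x) {γ K : ℝ} (hγ : γ ∈ Set.Ioo (0:ℝ) 1) (hK : 0 < K)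
    (hdrift : ∀ x, ∫⁻ y, ENNReal.ofReal (V y) ∂(P x) ≤ ENNReal.ofReal (γ * V x + K))
    {R : ℝ} (hR : 2 * K / (1 - γ) < R) {ζ : ℝ} {ν : Measure X} [IsProbabilityMeasure ν]
    (hminor : ∀ x, V x ≤ R → ∀ A : Set X, MeasurableSet A → ENNReal.ofReal ζ * ν A ≤ P x A)
    {ζ₀ : ℝ} (hζ₀ : ζ₀ ∈ Set.Ioo 0 ζ) {γ₀ : ℝ} (hγ₀ : γ₀ ∈ Set.Ioo (γ + 2 * K / R) 1)
    {β : ℝ} (hβ : β = ζ₀ / K) {ζbar : ℝ}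
    (hζbar : ζbar = max (1 - (ζ - ζ₀)) ((2 + R * β * γ₀) / (2 + R * β)))
    (μ₁ μ₂ : Measure X) [IsProbabilityMeasure μ₁] [IsProbabilityMeasure μ₂] :
    rhoBeta β V (P ∘ₘ μ₁) (P ∘ₘ μ₂) ≤ ENNReal.ofReal ζbar * rhoBeta β V μ₁ μ₂ := by
  obtain ⟨hγ0, hγ1⟩ := hγ
  obtain ⟨hζ₀0, hζ₀ζ⟩ := hζ₀
  obtain ⟨hγ₀l, hγ₀1⟩ := hγ₀
  have hR0 : 0 < R := (div_pos (by positivity) (by linarith)).trans hR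
  have hβ0 : 0 ≤ β := hβ ▸ by positivity
  have hβK : β * K = ζ₀ := by rw [hβ]; field_simp
  have hq : (2 + R * β * γ₀) / (2 + R * β) ≤ ζbar := hζbar ▸ le_max_right _ _
  have hγ₀q : γ₀ ≤ (2 + R * β * γ₀) / (2 + R * β) := by
    rw [le_div_iff₀ (by positivity)]
    nlinarith [mul_nonneg hR0.le hβ0]
  have hγγ₀ : γ ≤ γ₀ := by
    have : 0 ≤ 2 * K / R := by positivity
    linarith
  have hrP := couplingMass_smul_le (P := P) hminor
  exact lintegral_tvMeasure_comp_le (measurable_residualPair (measurable_couplingMass hV R ζ) hrP)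
    (le_add_residualPair hrP) (measurable_const.add (hV.const_mul β)).ennreal_ofReal
    (lintegral_residualPair_couplingMass_le hV hV0 hβ0 hγ0.le hK.le (hζ₀0.trans hζ₀ζ).le
      (by linarith) hdrift hminor
      (fun S hS => pair_drift_sub_le hβ0 hβK (by linarith) (hζbar ▸ le_max_left _ _) hS)
      (fun S hS => pair_drift_le_of_le hR0 hβ0 hK.le hγ₀l hγ₀1.le hq hS))
    (by simp)

lemma tvMeasure_univ_le_rhoBeta {β : ℝ} {V : X → ℝ} (hβ : 0 ≤ β) (hV0 : ∀ x, 0 ≤ V x)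
    (μ ν : Measure X) : tvMeasure μ ν Set.univ ≤ rhoBeta β V μ ν :=
  calc tvMeasure μ ν Set.univ = ∫⁻ _, 1 ∂tvMeasure μ ν := lintegral_one.symm
    _ ≤ rhoBeta β V μ ν :=
      lintegral_mono fun x => one_le_ofReal.2 (le_add_of_nonneg_right (mul_nonneg hβ (hV0 x)))

end HairerMattingly

section Iteration

variable {X : Type*} [MeasurableSpace X] {P : Kernel X X} {μ : Measure X}

lemma kernelIter_succ (n : ℕ) : kernelIter P μ (n + 1) = P ∘ₘ kernelIter P μ n :=
  Function.iterate_succ_apply' _ _ _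

instance isProbabilityMeasure_kernelIter [IsMarkovKernel P] [IsProbabilityMeasure μ] (n : ℕ) :
    IsProbabilityMeasure (kernelIter P μ n) := by
  induction n with
  | zero => exact ‹_›
  | succ n ih =>
    rw [kernelIter_succ]
    infer_instance

lemma kernelIter_le_pow_mul [IsMarkovKernel P] {d : Measure X → Measure X → ℝ≥0∞} {c : ℝ≥0∞}
    (hd : ∀ μ₁ μ₂ : Measure X, [IsProbabilityMeasure μ₁] → [IsProbabilityMeasure μ₂] →
      d (P ∘ₘ μ₁) (P ∘ₘ μ₂) ≤ c * d μ₁ μ₂)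
    {π : Measure X} [IsProbabilityMeasure π] (hπ : P ∘ₘ π = π) [IsProbabilityMeasure μ] (n : ℕ) :
    d (kernelIter P μ n) π ≤ c ^ n * d μ π := by
  induction n with
  | zero => rw [pow_zero, one_mul]; rfl
  | succ n ih =>
    calc d (kernelIter P μ (n + 1)) π = d (P ∘ₘ kernelIter P μ n) (P ∘ₘ π) := by
          rw [kernelIter_succ, hπ]
      _ ≤ c * d (kernelIter P μ n) π := hd _ _
      _ ≤ c * (c ^ n * d μ π) := by gcongr
      _ = c ^ (n + 1) * d μ π := by ring

end Iteration

theorem hairer_mattingly_geometric_ergodicity_general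
    {X : Type*} [MeasurableSpace X]
    (P : Kernel X X) [IsMarkovKernel P]
    (V : X → ℝ) (hVmeas : Measurable V) (hVnonneg : ∀ x, 0 ≤ V x)
    (γ K : ℝ) (hγ : γ ∈ Set.Ioo (0:ℝ) 1) (hK : 0 < K)
    (hdrift : ∀ x, ∫⁻ y, ENNReal.ofReal (V y) ∂(P x) ≤ ENNReal.ofReal (γ * V x + K))
    (R : ℝ) (hR : 2 * K / (1 - γ) < R)
    (ζ : ℝ)
    (ν : Measure X) [IsProbabilityMeasure ν]
    (hminor : ∀ x, V x ≤ R → ∀ A : Set X, MeasurableSet A →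
      ENNReal.ofReal ζ * ν A ≤ (P x) A)
    (ζ₀ : ℝ) (hζ₀ : ζ₀ ∈ Set.Ioo 0 ζ)
    (γ₀ : ℝ) (hγ₀ : γ₀ ∈ Set.Ioo (γ + 2 * K / R) 1)
    (β : ℝ) (hβ : β = ζ₀ / K)
    (ζbar : ℝ) (hζbar : ζbar = max (1 - (ζ - ζ₀)) ((2 + R * β * γ₀) / (2 + R * β)))
    (π : Measure X) [IsProbabilityMeasure π]
    (hπinv : π.bind (fun x => P x) = π)
    (μ : Measure X) [IsProbabilityMeasure μ] :
    ∀ n : ℕ,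
      tvMeasure (kernelIter P μ n) π Set.univ ≤ rhoBeta β V (kernelIter P μ n) π ∧
      rhoBeta β V (kernelIter P μ n) π ≤ ENNReal.ofReal ζbar ^ n * rhoBeta β V μ π := by
  have hβ0 : 0 ≤ β := hβ ▸ div_nonneg hζ₀.1.le hK.le
  intro n
  exact ⟨tvMeasure_univ_le_rhoBeta hβ0 hVnonneg _ _,
    kernelIter_le_pow_mul (fun μ₁ μ₂ _ _ => rhoBeta_comp_le hVmeas hVnonneg hγ hK hdrift hR hminor
      hζ₀ hγ₀ hβ hζbar μ₁ μ₂) hπinv n⟩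

/-- Geometric convergence to the invariant measure in the weighted (and hence in the plain)
total variation distance, as a consequence of the Hairer–Mattingly contraction. -/
theorem hairer_mattingly_geometric_ergodicity
    {X : Type*} [MeasurableSpace X]
    (P : Kernel X X) [IsMarkovKernel P]
    (V : X → ℝ) (hVmeas : Measurable V) (hVnonneg : ∀ x, 0 ≤ V x)
    (γ K : ℝ) (hγ : γ ∈ Set.Ioo (0:ℝ) 1) (hK : 0 < K)
    (hdrift : ∀ x, ∫⁻ y, ENNReal.ofReal (V y) ∂(P x) ≤ ENNReal.ofReal (γ * V x + K))
    (R : ℝ) (hR : 2 * K / (1 - γ) < R)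
    (ζ : ℝ) (hζ : ζ ∈ Set.Ioo (0:ℝ) 1)
    (ν : Measure X) [IsProbabilityMeasure ν]
    (hminor : ∀ x, V x ≤ R → ∀ A : Set X, MeasurableSet A →
      ENNReal.ofReal ζ * ν A ≤ (P x) A)
    (ζ₀ : ℝ) (hζ₀ : ζ₀ ∈ Set.Ioo 0 ζ)
    (γ₀ : ℝ) (hγ₀ : γ₀ ∈ Set.Ioo (γ + 2 * K / R) 1)
    (β : ℝ) (hβ : β = ζ₀ / K)
    (ζbar : ℝ) (hζbar : ζbar = max (1 - (ζ - ζ₀)) ((2 + R * β * γ₀) / (2 + R * β)))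
    (π : Measure X) [IsProbabilityMeasure π]
    (hπinv : π.bind (fun x => P x) = π)
    (hπV : ∫⁻ x, ENNReal.ofReal (V x) ∂π < ⊤)
    (μ : Measure X) [IsProbabilityMeasure μ]
    (hμV : ∫⁻ x, ENNReal.ofReal (V x) ∂μ < ⊤) :
    ∀ n : ℕ,
      tvMeasure (kernelIter P μ n) π Set.univ ≤ rhoBeta β V (kernelIter P μ n) π ∧
      rhoBeta β V (kernelIter P μ n) π ≤ ENNReal.ofReal ζbar ^ n * rhoBeta β V μ π :=
  hairer_mattingly_geometric_ergodicity_general P V hVmeas hVnonneg γ K hγ hK hdrift R hR ζ ν hminor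
    ζ₀ hζ₀ γ₀ hγ₀ β hβ ζbar hζbar π hπinv μ
end

section
/- Let X be a compact metric space and T : X → X a continuous map. Let K be a nonempty convex set of T-invariant Borel probability measures on X that is compact in the weak-* topology and has the following closure property: whenever μ ∈ K and μ̃ is a T-invariant probability measure absolutely continuous with respect to μ, then μ̃ ∈ K. Then every μ ∈ K belongs to the closed convex hull (in the weak-* topology) of the set of ergodic measures contained in K. -/
/-!
Integration against bounded continuous functions embeds the probability measures, with the
weak-* topology, into the locally convex space `(X →ᵇ ℝ) → ℝ`. There the image of `K` is
compact and convex, so by Krein–Milman it is the closed convex hull of its extreme points. An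
extreme point `μ` is ergodic: an invariant set `A` with `0 < μ A < 1` would write `μ` as a proper
convex combination of the conditioned measures `μ[|A]` and `μ[|Aᶜ]`, which are invariant and
absolutely continuous with respect to `μ`, hence lie in `K`, and differ from `μ`.
-/

open MeasureTheory ProbabilityTheory Set Topology
open scoped NNReal ENNReal BoundedContinuousFunction

section InvariantMeasures

variable {X : Type*} [MeasurableSpace X]

def IsInvariantMeasure (T : X → X) (μ : Measure X) : Prop :=
  ∀ A : Set X, MeasurableSet A → μ (T ⁻¹' A) = μ A

def IsErgodicMeasure (T : X → X) (μ : Measure X) : Prop :=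
  ∀ A : Set X, MeasurableSet A → T ⁻¹' A = A → μ A = 0 ∨ μ A = 1

lemma IsInvariantMeasure.cond {T : X → X} {μ : Measure X} (hμ : IsInvariantMeasure T μ)
    {S : Set X} (hS : MeasurableSet S) (hTS : T ⁻¹' S = S) : IsInvariantMeasure T μ[|S] := by
  intro B hB
  rw [cond_apply hS, cond_apply hS, ← hμ _ (hS.inter hB), preimage_inter, hTS]

end InvariantMeasures

namespace MeasureTheory.ProbabilityMeasure

variable {X : Type*} [MeasurableSpace X]

noncomputable def cond (μ : ProbabilityMeasure X) (A : Set X) (hA : (μ : Measure X) A ≠ 0) :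
    ProbabilityMeasure X :=
  ⟨(μ : Measure X)[|A], cond_isProbabilityMeasure hA⟩

noncomputable def convexCombination {ι : Type*} [Fintype ι] (w : ι → ℝ≥0) (hw : ∑ i, w i = 1)
    (m : ι → ProbabilityMeasure X) : ProbabilityMeasure X :=
  ⟨∑ i, (w i : ℝ≥0∞) • (m i : Measure X), ⟨by simp [← ENNReal.ofNNReal_finsetSum, hw]⟩⟩

lemma toMeasure_convexCombination {ι : Type*} [Fintype ι] (w : ι → ℝ≥0) (hw : ∑ i, w i = 1)
    (m : ι → ProbabilityMeasure X) :
    (convexCombination w hw m : Measure X) = ∑ i, (w i : ℝ≥0∞) • (m i : Measure X) := rfl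

def finConvexCombinations (E : Set (ProbabilityMeasure X)) : Set (ProbabilityMeasure X) :=
  {ν | ∃ (n : ℕ) (w : Fin n → ℝ≥0) (m : Fin n → ProbabilityMeasure X),
    (∀ i, m i ∈ E) ∧ (∑ i, w i = 1) ∧ (ν : Measure X) = ∑ i, ((w i : ℝ≥0∞) • (m i : Measure X))}

end MeasureTheory.ProbabilityMeasure

section IntegralPairing

variable {X : Type*} [TopologicalSpace X] [MeasurableSpace X]

noncomputable def integralPairing (μ : ProbabilityMeasure X) : (X →ᵇ ℝ) → ℝ :=
  fun f ↦ ∫ x, f x ∂(μ : Measure X)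

section OpensMeasurable

variable [OpensMeasurableSpace X]

lemma continuous_integralPairing : Continuous (integralPairing (X := X)) :=
  continuous_pi fun f ↦ ProbabilityMeasure.continuous_integral_boundedContinuousFunction f

lemma isInducing_integralPairing : IsInducing (integralPairing (X := X)) := by
  refine isInducing_iff_nhds.2 fun μ ↦
    le_antisymm continuous_integralPairing.continuousAt.le_comap ?_
  refine Filter.tendsto_id'.1 <| ProbabilityMeasure.tendsto_iff_forall_integral_tendsto.2
    fun f ↦ ?_
  exact ((continuous_apply (A := fun _ ↦ ℝ) f).tendsto _).comp Filter.tendsto_comap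

lemma integralPairing_eq_sum_smul {ι : Type*} [Fintype ι] {ν : ProbabilityMeasure X}
    {w : ι → ℝ≥0} {m : ι → ProbabilityMeasure X}
    (h : (ν : Measure X) = ∑ i, (w i : ℝ≥0∞) • (m i : Measure X)) :
    integralPairing ν = ∑ i, (w i : ℝ) • integralPairing (m i) := by
  funext f
  simp only [integralPairing, h, Finset.sum_apply, Pi.smul_apply]
  rw [integral_finsetSum_measure fun i _ ↦ (f.integrable _).smul_measure ENNReal.coe_ne_top]
  simp [NNReal.smul_def]

lemma integralPairing_eq_add_smul {ν μ₁ μ₂ : ProbabilityMeasure X} {a b : ℝ≥0}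
    (h : (ν : Measure X) = (a : ℝ≥0∞) • (μ₁ : Measure X) + (b : ℝ≥0∞) • (μ₂ : Measure X)) :
    integralPairing ν = (a : ℝ) • integralPairing μ₁ + (b : ℝ) • integralPairing μ₂ := by
  simpa using integralPairing_eq_sum_smul (w := ![a, b]) (m := ![μ₁, μ₂]) (by simpa using h)

lemma convex_image_integralPairing {K : Set (ProbabilityMeasure X)}
    (hconv : ∀ μ₁ ∈ K, ∀ μ₂ ∈ K, ∀ t : ℝ≥0, t ≤ 1 → ∀ ν : ProbabilityMeasure X,
      (ν : Measure X) =
        (t : ℝ≥0∞) • (μ₁ : Measure X) + ((1 - t : ℝ≥0) : ℝ≥0∞) • (μ₂ : Measure X) → ν ∈ K) :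
    Convex ℝ (integralPairing '' K) := by
  rintro _ ⟨μ₁, hμ₁, rfl⟩ _ ⟨μ₂, hμ₂, rfl⟩ a b ha hb hab
  lift a to ℝ≥0 using ha
  lift b to ℝ≥0 using hb
  have hab' : a + b = 1 := by exact_mod_cast hab
  let ν := ProbabilityMeasure.convexCombination ![a, b] (by simpa using hab') ![μ₁, μ₂]
  have hν : (ν : Measure X) =
      (a : ℝ≥0∞) • (μ₁ : Measure X) + (b : ℝ≥0∞) • (μ₂ : Measure X) := by
    simp [ν, ProbabilityMeasure.toMeasure_convexCombination]
  have hb : b = 1 - a := (tsub_eq_of_eq_add_rev hab'.symm).symm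
  exact ⟨ν, hconv μ₁ hμ₁ μ₂ hμ₂ a (hab' ▸ le_self_add) ν (hb ▸ hν),
    integralPairing_eq_add_smul hν⟩

lemma convexHull_image_integralPairing_subset (E : Set (ProbabilityMeasure X)) :
    convexHull ℝ (integralPairing '' E) ⊆
      integralPairing '' ProbabilityMeasure.finConvexCombinations E := by
  intro _ hz
  obtain ⟨ι, _, w, z, hw₀, hw₁, hzE, rfl⟩ := mem_convexHull_iff_exists_fintype.1 hz
  choose m hmE hmz using hzE
  let e := (Fintype.equivFin ι).symm
  let w' : Fin (Fintype.card ι) → ℝ≥0 := fun j ↦ (w (e j)).toNNReal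
  have hw'_coe (j) : (w' j : ℝ) = w (e j) := Real.coe_toNNReal _ (hw₀ _)
  have hw' : ∑ j, w' j = 1 := NNReal.coe_injective <| by
    rw [NNReal.coe_sum, NNReal.coe_one, ← hw₁, ← e.sum_comp w]
    exact Finset.sum_congr rfl fun j _ ↦ hw'_coe j
  refine ⟨ProbabilityMeasure.convexCombination w' hw' (m ∘ e),
    ⟨_, w', m ∘ e, fun j ↦ hmE _, hw', rfl⟩, ?_⟩
  rw [integralPairing_eq_sum_smul (ProbabilityMeasure.toMeasure_convexCombination ..),
    ← e.sum_comp]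
  exact Finset.sum_congr rfl fun j _ ↦ by rw [hw'_coe, Function.comp_apply, hmz]

lemma integralPairing_mem_openSegment_cond (μ : ProbabilityMeasure X) {A : Set X}
    (hA : MeasurableSet A) (h₀ : (μ : Measure X) A ≠ 0) (h₁ : (μ : Measure X) Aᶜ ≠ 0) :
    integralPairing μ ∈
      openSegment ℝ (integralPairing (μ.cond A h₀)) (integralPairing (μ.cond Aᶜ h₁)) := by
  have hdecomp : (μ : Measure X) = (μ A : ℝ≥0∞) • (μ.cond A h₀ : Measure X) +
      (μ Aᶜ : ℝ≥0∞) • (μ.cond Aᶜ h₁ : Measure X) := by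
    simp only [ProbabilityMeasure.ennreal_coeFn_eq_coeFn_toMeasure, ProbabilityMeasure.cond,
      ProbabilityMeasure.coe_mk, ProbabilityTheory.cond, smul_smul,
      ENNReal.mul_inv_cancel h₀ (measure_ne_top _ _),
      ENNReal.mul_inv_cancel h₁ (measure_ne_top _ _), one_smul,
      Measure.restrict_add_restrict_compl hA]
  have hsum : μ A + μ Aᶜ = 1 := by
    rw [← ENNReal.coe_inj]
    push_cast
    simp only [ProbabilityMeasure.ennreal_coeFn_eq_coeFn_toMeasure, measure_add_measure_compl hA,
      measure_univ]
  refine ⟨μ A, μ Aᶜ, ?_, ?_, by exact_mod_cast hsum, (integralPairing_eq_add_smul hdecomp).symm⟩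
  · exact NNReal.coe_pos.2 (pos_iff_ne_zero.2 ((μ.null_iff_toMeasure_null A).not.2 h₀))
  · exact NNReal.coe_pos.2 (pos_iff_ne_zero.2 ((μ.null_iff_toMeasure_null Aᶜ).not.2 h₁))

end OpensMeasurable

variable [HasOuterApproxClosed X] [BorelSpace X]

lemma isEmbedding_integralPairing : IsEmbedding (integralPairing (X := X)) :=
  ⟨isInducing_integralPairing, fun _ _ h ↦ ProbabilityMeasure.toMeasure_injective <|
    ext_of_forall_integral_eq_of_IsFiniteMeasure fun f ↦ congrFun h f⟩

lemma isErgodicMeasure_of_integralPairing_mem_extremePoints {T : X → X}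
    {K : Set (ProbabilityMeasure X)} (hinv : ∀ μ ∈ K, IsInvariantMeasure T μ)
    (hclosed : ∀ μ ∈ K, ∀ ν : ProbabilityMeasure X,
      IsInvariantMeasure T ν → (ν : Measure X) ≪ (μ : Measure X) → ν ∈ K)
    {μ : ProbabilityMeasure X} (hμ : μ ∈ K)
    (hext : integralPairing μ ∈ (integralPairing '' K).extremePoints ℝ) :
    IsErgodicMeasure T μ := by
  intro A hA hTA
  by_contra! h
  have h₁ : (μ : Measure X) Aᶜ ≠ 0 := (prob_compl_eq_zero_iff hA).not.2 h.2
  have cond_mem {S : Set X} (hS : MeasurableSet S) (hTS : T ⁻¹' S = S)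
      (hS₀ : (μ : Measure X) S ≠ 0) : μ.cond S hS₀ ∈ K :=
    hclosed μ hμ _ ((hinv μ hμ).cond hS hTS) cond_absolutelyContinuous
  have hcond : μ.cond A h.1 = μ := isEmbedding_integralPairing.injective <|
    ((mem_extremePoints.1 hext).2 _ ⟨_, cond_mem hA hTA h.1, rfl⟩
      _ ⟨_, cond_mem hA.compl (by rw [preimage_compl, hTA]) h₁, rfl⟩
      (integralPairing_mem_openSegment_cond μ hA h.1 h₁)).1
  apply h.2
  rw [← hcond]
  exact cond_apply_self h.1 (measure_ne_top _ _)

end IntegralPairing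

theorem mem_closed_convexHull_of_ergodic_measures_general
    {X : Type*} [MetricSpace X] [MeasurableSpace X] [BorelSpace X]
    (T : X → X)
    (K : Set (ProbabilityMeasure X))
    (hinv : ∀ μ ∈ K, ∀ A : Set X, MeasurableSet A →
      (μ : Measure X) (T ⁻¹' A) = (μ : Measure X) A)
    (hconv : ∀ μ₁ ∈ K, ∀ μ₂ ∈ K, ∀ t : ℝ≥0, t ≤ 1 → ∀ ν : ProbabilityMeasure X,
      (ν : Measure X) =
        (t : ℝ≥0∞) • (μ₁ : Measure X) + ((1 - t : ℝ≥0) : ℝ≥0∞) • (μ₂ : Measure X) → ν ∈ K)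
    (hcompact : IsCompact K)
    (hclosed : ∀ μ ∈ K, ∀ ν : ProbabilityMeasure X,
      (∀ A : Set X, MeasurableSet A → (ν : Measure X) (T ⁻¹' A) = (ν : Measure X) A) →
      (ν : Measure X) ≪ (μ : Measure X) → ν ∈ K) :
    ∀ μ ∈ K, μ ∈ closure {ν : ProbabilityMeasure X |
      ∃ (n : ℕ) (w : Fin n → ℝ≥0) (m : Fin n → ProbabilityMeasure X),
        (∀ i, m i ∈ K ∧
          (∀ A : Set X, MeasurableSet A → T ⁻¹' A = A →
            (m i : Measure X) A = 0 ∨ (m i : Measure X) A = 1)) ∧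
        (∑ i, w i = 1) ∧
        (ν : Measure X) = ∑ i, ((w i : ℝ≥0∞) • (m i : Measure X))} := by
  intro μ hμ
  change μ ∈ closure
    (ProbabilityMeasure.finConvexCombinations {ν | ν ∈ K ∧ IsErgodicMeasure T ν})
  have extremePoints_subset : (integralPairing '' K).extremePoints ℝ ⊆
      integralPairing '' {ν | ν ∈ K ∧ IsErgodicMeasure T ν} := by
    intro _ hext
    obtain ⟨ν, hν, rfl⟩ := hext.1
    exact ⟨ν, ⟨hν, isErgodicMeasure_of_integralPairing_mem_extremePoints hinv hclosed hν hext⟩,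
      rfl⟩
  rw [isEmbedding_integralPairing.closure_eq_preimage_closure_image]
  refine closure_mono ((convexHull_mono extremePoints_subset).trans
    (convexHull_image_integralPairing_subset _)) ?_
  rw [closure_convexHull_extremePoints (hcompact.image continuous_integralPairing)
    (convex_image_integralPairing hconv)]
  exact mem_image_of_mem _ hμ

/-- On a compact metric space, every member of a weak-* compact convex set `K` of invariant
probability measures, closed under taking invariant measures absolutely continuous w.r.t. its
members, lies in the weak-* closed convex hull of the ergodic measures contained in `K`. -/
theorem mem_closed_convexHull_of_ergodic_measures
    {X : Type*} [MetricSpace X] [CompactSpace X] [MeasurableSpace X] [BorelSpace X]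
    (T : X → X) (hT : Continuous T)
    (K : Set (ProbabilityMeasure X)) (hKne : K.Nonempty)
    (hinv : ∀ μ ∈ K, ∀ A : Set X, MeasurableSet A →
      (μ : Measure X) (T ⁻¹' A) = (μ : Measure X) A)
    (hconv : ∀ μ₁ ∈ K, ∀ μ₂ ∈ K, ∀ t : ℝ≥0, t ≤ 1 → ∀ ν : ProbabilityMeasure X,
      (ν : Measure X) =
        (t : ℝ≥0∞) • (μ₁ : Measure X) + ((1 - t : ℝ≥0) : ℝ≥0∞) • (μ₂ : Measure X) → ν ∈ K)
    (hcompact : IsCompact K)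
    (hclosed : ∀ μ ∈ K, ∀ ν : ProbabilityMeasure X,
      (∀ A : Set X, MeasurableSet A → (ν : Measure X) (T ⁻¹' A) = (ν : Measure X) A) →
      (ν : Measure X) ≪ (μ : Measure X) → ν ∈ K) :
    ∀ μ ∈ K, μ ∈ closure {ν : ProbabilityMeasure X |
      ∃ (n : ℕ) (w : Fin n → ℝ≥0) (m : Fin n → ProbabilityMeasure X),
        (∀ i, m i ∈ K ∧
          (∀ A : Set X, MeasurableSet A → T ⁻¹' A = A →
            (m i : Measure X) A = 0 ∨ (m i : Measure X) A = 1)) ∧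
        (∑ i, w i = 1) ∧
        (ν : Measure X) = ∑ i, ((w i : ℝ≥0∞) • (m i : Measure X))} :=
  mem_closed_convexHull_of_ergodic_measures_general T K hinv hconv hcompact hclosed
end

section
/- Let ω̄ : ℝ → ℝ be continuous and 1-periodic, let χ : ℝ → ℝ be continuous, 1-periodic, and strictly positive, and let ε > 0. Define Ω(θ) = −2·∫₀^θ ω̄(s)/χ(s)² ds and ρ(θ) = χ(θ)⁻²·∫_θ^{θ+1} e^{−(Ω(θ)−Ω(s))/ε} ds. Then: (i) ρ is strictly positive and 1-periodic; (ii) the function θ ↦ χ(θ)²ρ(θ) is differentiable, and for every θ ∈ ℝ one has the constant-flux identity (ε/2)·(d/dθ)(χ²ρ)(θ) − ω̄(θ)·ρ(θ) = (ε/2)·(e^{Ω(1)/ε} − 1). In particular ρ is a stationary density for the Fokker–Planck operator: (ε/2)·(χ²ρ)″ − (ω̄ρ)′ = 0 in the sense that (ε/2)(χ²ρ)′ − ω̄ρ is constant. -/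
open MeasureTheory intervalIntegral

/-!
With `Φ = Ω / ε` one has `χ² ρ (θ) = e^{-Φ θ} ∫_θ^{θ+1} e^{Φ s} ds`. Differentiating this product
gives `(χ² ρ)' = -Φ' · χ² ρ + (e^{Φ(θ+1) - Φ θ} - 1)`; since `Φ' = -2 ω̄ / (ε χ²)` the first term is
`(2/ε) ω̄ ρ`, and since `ω̄ / χ²` is `1`-periodic, `Φ (θ + 1) - Φ θ = Ω 1 / ε`. The same
quasi-periodicity of `Φ` makes the integral, hence `ρ`, `1`-periodic.
-/

theorem Continuous.hasDerivAt_integral_self_add {E : Type*} [NormedAddCommGroup E]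
    [NormedSpace ℝ E] [CompleteSpace E] {g : ℝ → E} (hg : Continuous g) (T θ : ℝ) :
    HasDerivAt (fun u => ∫ s in u..u + T, g s) (g (θ + T) - g θ) θ := by
  have hupper : HasDerivAt (fun u => ∫ s in (0:ℝ)..u + T, g s) (g (θ + T)) θ :=
    (hg.integral_hasStrictDerivAt 0 (θ + T)).hasDerivAt.comp_add_const θ T
  refine (hupper.sub (hg.integral_hasStrictDerivAt 0 θ).hasDerivAt).congr_of_eventuallyEq ?_
  filter_upwards with u
  exact (integral_interval_sub_left (hg.intervalIntegrable _ _) (hg.intervalIntegrable _ _)).symm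

theorem hasDerivAt_integral_exp_sub {Φ Φ' : ℝ → ℝ} (hΦ : ∀ x, HasDerivAt Φ (Φ' x) x)
    (T θ : ℝ) :
    HasDerivAt (fun u => ∫ s in u..u + T, Real.exp (Φ s - Φ u))
      (-Φ' θ * (∫ s in θ..θ + T, Real.exp (Φ s - Φ θ)) + (Real.exp (Φ (θ + T) - Φ θ) - 1))
      θ := by
  have hΦc : Continuous Φ := continuous_iff_continuousAt.2 fun x => (hΦ x).continuousAt
  have hfactor : ∀ u, ∫ s in u..u + T, Real.exp (Φ s - Φ u) =
      Real.exp (-Φ u) * ∫ s in u..u + T, Real.exp (Φ s) := fun u => by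
    rw [← intervalIntegral.integral_const_mul]
    simp only [← Real.exp_add, neg_add_eq_sub]
  have hprod :=
    (hΦ θ).neg.exp.mul ((Real.continuous_exp.comp hΦc).hasDerivAt_integral_self_add T θ)
  refine (hprod.congr_of_eventuallyEq (Filter.Eventually.of_forall hfactor)).congr_deriv ?_
  simp only [Function.comp_apply, Pi.neg_apply, hfactor θ, mul_sub, ← Real.exp_add,
    neg_add_cancel, Real.exp_zero, neg_add_eq_sub]
  ring

theorem periodic_integral_exp_sub {Φ : ℝ → ℝ} {T c : ℝ} (hΦ : ∀ x, Φ (x + T) = Φ x + c) :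
    Function.Periodic (fun u => ∫ s in u..u + T, Real.exp (Φ s - Φ u)) T := fun u => by
  dsimp only
  rw [← integral_comp_add_right]
  congr 1 with s
  rw [hΦ s, hΦ u, add_sub_add_right_eq_sub]

/-- The (unnormalized) density `ρ(θ) = χ(θ)⁻² ∫_θ^{θ+1} e^{-(Ω(θ)-Ω(s))/ε} ds` is positive,
`1`-periodic, and satisfies the constant-flux identity
`(ε/2) (χ²ρ)'(θ) - ω̄(θ) ρ(θ) = (ε/2)(e^{Ω(1)/ε} - 1)`;
in particular it is a stationary density for the Fokker–Planck operator. -/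
theorem stationary_density_fokker_planck
    (w χ : ℝ → ℝ) (hw : Continuous w) (hwper : ∀ θ, w (θ + 1) = w θ)
    (hχ : Continuous χ) (hχpos : ∀ θ, 0 < χ θ) (hχper : ∀ θ, χ (θ + 1) = χ θ)
    (ε : ℝ) (hε : 0 < ε)
    (Ω ρ : ℝ → ℝ)
    (hΩ : ∀ θ, Ω θ = -2 * ∫ s in (0:ℝ)..θ, w s / (χ s) ^ 2)
    (hρ : ∀ θ, ρ θ = ((χ θ) ^ 2)⁻¹ * ∫ s in θ..(θ + 1), Real.exp (-(Ω θ - Ω s) / ε)) :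
    (∀ θ, 0 < ρ θ) ∧ (∀ θ, ρ (θ + 1) = ρ θ) ∧
    (∀ θ, ∃ d : ℝ, HasDerivAt (fun u => (χ u) ^ 2 * ρ u) d θ ∧
      ε / 2 * d - w θ * ρ θ = ε / 2 * (Real.exp (Ω 1 / ε) - 1)) := by
  have hχsq : ∀ θ, (χ θ) ^ 2 ≠ 0 := fun θ => pow_ne_zero 2 (hχpos θ).ne'
  set f : ℝ → ℝ := fun s => w s / (χ s) ^ 2
  have hfc : Continuous f := hw.div (hχ.pow 2) hχsq
  have hfper : Function.Periodic f 1 := fun θ => by simp only [f, hwper θ, hχper θ]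
  set Φ : ℝ → ℝ := fun θ => Ω θ / ε
  have hΦ' : ∀ θ, HasDerivAt Φ (-2 * f θ / ε) θ := fun θ =>
    (((hfc.integral_hasStrictDerivAt 0 θ).hasDerivAt.const_mul (-2)).div_const ε)
      |>.congr_of_eventuallyEq (.of_forall fun u => by simp only [Φ, hΩ u])
  have hΦadd : ∀ θ, Φ (θ + 1) = Φ θ + Φ 1 := fun θ => by
    simp only [Φ, hΩ, hfper.intervalIntegral_add_eq_add 0 θ (hfc.intervalIntegrable), zero_add]
    ring
  set I : ℝ → ℝ := fun θ => ∫ s in θ..θ + 1, Real.exp (Φ s - Φ θ)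
  have hχρ : ∀ θ, (χ θ) ^ 2 * ρ θ = I θ := fun θ => by
    rw [hρ θ, mul_inv_cancel_left₀ (hχsq θ)]
    congr 1 with s
    simp only [Φ]
    ring_nf
  have hρI : ∀ θ, ρ θ = ((χ θ) ^ 2)⁻¹ * I θ := fun θ => by
    rw [← hχρ, inv_mul_cancel_left₀ (hχsq θ)]
  have hΦc : Continuous Φ := continuous_iff_continuousAt.2 fun θ => (hΦ' θ).continuousAt
  have hIpos : ∀ θ, 0 < I θ := fun θ =>
    intervalIntegral_pos_of_pos
      ((Real.continuous_exp.comp (hΦc.sub continuous_const)).intervalIntegrable _ _)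
      (fun _ => Real.exp_pos _) (by linarith)
  refine ⟨fun θ => ?_, fun θ => ?_, fun θ =>
    ⟨_, (hasDerivAt_integral_exp_sub hΦ' 1 θ).congr_of_eventuallyEq (.of_forall hχρ), ?_⟩⟩
  · rw [hρI]
    exact mul_pos (inv_pos.2 (pow_pos (hχpos θ) 2)) (hIpos θ)
  · rw [hρI, hρI, hχper, show I (θ + 1) = I θ from periodic_integral_exp_sub hΦadd θ]
  · rw [hΦadd, add_sub_cancel_left, hρI]
    simp only [f, I, Φ]
    field_simp
    ring
end

section
/- Let Ω : ℝ → ℝ be twice continuously differentiable with |Ω′(θ)| ≤ M and |Ω″(θ)| ≤ M for all θ, and Ω′(θ) ≤ −c₀ < 0 for all θ. Then there exist constants C > 0 and ε₀ > 0 (depending only on M and c₀) such that for all ε ∈ (0, ε₀) and all θ ∈ ℝ: |∫_θ^{θ+1} e^{(Ω(s)−Ω(θ))/ε} ds − ε/(−Ω′(θ))| ≤ C·ε²·(log(1/ε))². -/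
/-!
Split `[θ, θ + 1]` at `θ + δ` with `δ = 2 ε log (1/ε) / c₀`. On `[θ, θ + δ]` the second-order
Taylor bound puts `(Ω s - Ω θ) / ε` within `M δ² / ε = O(ε log² (1/ε))` of the linear phase
`Ω'(θ) (s - θ) / ε`, whose exponential integrates to `ε / (-Ω'(θ))` up to `e^{-c₀ δ / ε}`.
On `[θ + δ, θ + 1]` the decrease `Ω s - Ω θ ≤ -c₀ (s - θ)` bounds the integrand by
`e^{-c₀ δ / ε} = ε²`. The dominant error is the head's, `O(M δ² / c₀) = O(ε² log² (1/ε))`.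
-/

open MeasureTheory intervalIntegral Real Set Filter Topology

lemma abs_exp_sub_exp_le {u v : ℝ} (h : |u - v| ≤ 1) :
    |exp u - exp v| ≤ 2 * |u - v| * exp v := by
  have hsplit : exp u - exp v = exp v * (exp (u - v) - 1) := by
    rw [mul_sub, ← exp_add, add_sub_cancel, mul_one]
  rw [hsplit, abs_mul, abs_of_pos (exp_pos v), mul_comm]
  exact mul_le_mul_of_nonneg_right (abs_exp_sub_one_le h) (exp_pos v).le

lemma integral_exp_mul_sub {b : ℝ} (hb : b ≠ 0) (x y : ℝ) :
    ∫ s in x..y, exp (b * (s - x)) = (exp (b * (y - x)) - 1) / b := by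
  rw [intervalIntegral.integral_comp_sub_right (fun s => exp (b * s)),
    intervalIntegral.integral_comp_mul_left exp hb, integral_exp]
  simp [div_eq_inv_mul]

lemma integral_exp_mul_sub_le {b : ℝ} (hb : b < 0) (x y : ℝ) :
    ∫ s in x..y, exp (b * (s - x)) ≤ 1 / (-b) := by
  rw [integral_exp_mul_sub hb.ne, ← neg_div_neg_eq, neg_sub]
  gcongr
  · linarith
  · linarith [exp_pos (b * (y - x))]

lemma abs_integral_exp_le_of_le {u : ℝ → ℝ} {x y K : ℝ} (hxy : x ≤ y)
    (hu : ∀ s ∈ Icc x y, u s ≤ K) :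
    |∫ s in x..y, exp (u s)| ≤ exp K * (y - x) := by
  have := intervalIntegral.norm_integral_le_of_norm_le_const (a := x) (b := y)
    (f := fun s => exp (u s)) (C := exp K) fun s hs => by
      rw [uIoc_of_le hxy] at hs
      rw [norm_of_nonneg (exp_pos _).le]
      exact exp_le_exp.mpr (hu s (Ioc_subset_Icc_self hs))
  rwa [Real.norm_eq_abs, abs_of_nonneg (sub_nonneg.mpr hxy)] at this

lemma abs_integral_exp_sub_integral_exp_le {u v : ℝ → ℝ} {x y η : ℝ} (hxy : x ≤ y)
    (hu : Continuous u) (hv : Continuous v) (hη : η ≤ 1)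
    (huv : ∀ s ∈ Icc x y, |u s - v s| ≤ η) :
    |(∫ s in x..y, exp (u s)) - ∫ s in x..y, exp (v s)| ≤ 2 * η * ∫ s in x..y, exp (v s) := by
  have hexpu : Continuous fun s => exp (u s) := continuous_exp.comp hu
  have hexpv : Continuous fun s => exp (v s) := continuous_exp.comp hv
  rw [← integral_sub (hexpu.intervalIntegrable _ _) (hexpv.intervalIntegrable _ _),
    ← intervalIntegral.integral_const_mul]
  refine (abs_integral_le_integral_abs hxy).trans (integral_mono_on hxy
    ((hexpu.sub hexpv).abs.intervalIntegrable _ _)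
    ((continuous_const.mul hexpv).intervalIntegrable _ _) fun s hs => ?_)
  calc |exp (u s) - exp (v s)| ≤ 2 * |u s - v s| * exp (v s) :=
        abs_exp_sub_exp_le ((huv s hs).trans hη)
    _ ≤ 2 * η * exp (v s) := by gcongr; exact huv s hs

lemma abs_sub_sub_deriv_mul_le {f : ℝ → ℝ} {M : ℝ} (hf : ContDiff ℝ 2 f)
    (hM : ∀ x, |deriv (deriv f) x| ≤ M) (x y : ℝ) :
    |f y - f x - deriv f x * (y - x)| ≤ M * (y - x) ^ 2 := by
  have hf' : Differentiable ℝ (deriv f) :=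
    (hf.iterate_deriv' 1 1).differentiable one_ne_zero
  have hlip : ∀ t, |deriv f t - deriv f x| ≤ M * |t - x| := fun t => by
    simpa using convex_univ.norm_image_sub_le_of_norm_hasDerivWithin_le
      (fun z _ => (hf' z).hasDerivAt.hasDerivWithinAt) (fun z _ => hM z) (mem_univ x) (mem_univ t)
  have hderiv : ∀ t ∈ uIcc x y, HasDerivWithinAt (fun t => f t - deriv f x * t)
      (deriv f t - deriv f x) (uIcc x y) t := fun t _ =>
    (((hf.differentiable two_ne_zero) t).hasDerivAt.sub
      ((hasDerivAt_id t).const_mul (deriv f x))).hasDerivWithinAt.congr_deriv (by simp)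
  have hbound : ∀ t ∈ uIcc x y, ‖deriv f t - deriv f x‖ ≤ M * |y - x| := fun t ht =>
    (hlip t).trans (mul_le_mul_of_nonneg_left (abs_sub_left_of_mem_uIcc ht)
      ((abs_nonneg _).trans (hM x)))
  have := (convex_uIcc x y).norm_image_sub_le_of_norm_hasDerivWithin_le hderiv hbound
    left_mem_uIcc right_mem_uIcc
  rw [Real.norm_eq_abs, Real.norm_eq_abs, mul_assoc, ← sq, sq_abs] at this
  convert this using 2; ring

lemma tendsto_mul_log_inv_sq :
    Tendsto (fun ε => ε * log (1 / ε) ^ 2) (𝓝[>] 0) (𝓝 0) :=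
  ((tendsto_pow_log_div_mul_add_atTop 1 0 2 one_ne_zero).comp tendsto_inv_nhdsGT_zero).congr
    fun ε => by simp [div_eq_mul_inv, mul_comm]

lemma eventually_one_le_log_inv : ∀ᶠ ε in 𝓝[>] (0 : ℝ), 1 ≤ log (1 / ε) := by
  simpa using (tendsto_log_atTop.comp tendsto_inv_nhdsGT_zero).eventually_ge_atTop 1

lemma abs_integral_exp_sub_le_of_head_tail {f : ℝ → ℝ} {a c M ε δ θ : ℝ} (hf : Continuous f)
    (hc : 0 < c) (ha : a ≤ -c) (hε : 0 < ε) (hδ0 : 0 ≤ δ) (hδ1 : δ ≤ 1) (hMδ : M * δ ^ 2 ≤ ε)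
    (hhead : ∀ s ∈ Icc θ (θ + δ), |f s - f θ - a * (s - θ)| ≤ M * δ ^ 2)
    (htail : ∀ s ∈ Icc (θ + δ) (θ + 1), f s - f θ ≤ -(c * δ)) :
    |(∫ s in θ..θ + 1, exp ((f s - f θ) / ε)) - ε / (-a)| ≤
      2 * M * δ ^ 2 / c + exp (-(c * δ / ε)) * (ε / c + 1) := by
  set b := a / ε with hb
  have hbneg : b < 0 := div_neg_of_neg_of_pos (by linarith) hε
  have hb_inv : 1 / (-b) ≤ ε / c := by
    rw [hb, ← neg_div, one_div_div]
    exact div_le_div_of_nonneg_left hε.le hc (by linarith)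
  have hlin : ∫ s in θ..θ + δ, exp (b * (s - θ)) = (exp (b * δ) - 1) / b := by
    rw [integral_exp_mul_sub hbneg.ne, add_sub_cancel_left]
  have hlin_le : ∫ s in θ..θ + δ, exp (b * (s - θ)) ≤ ε / c :=
    (integral_exp_mul_sub_le hbneg _ _).trans hb_inv
  have hhead_diff := abs_integral_exp_sub_integral_exp_le (η := M * δ ^ 2 / ε)
    (u := fun s => (f s - f θ) / ε) (v := fun s => b * (s - θ)) (x := θ) (y := θ + δ)
    (by linarith) ((hf.sub continuous_const).div_const ε)
    (continuous_const.mul (continuous_id.sub continuous_const))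
    ((div_le_one hε).mpr hMδ) fun s hs => by
      rw [hb, div_mul_eq_mul_div, ← sub_div, abs_div, abs_of_pos hε]
      exact div_le_div_of_nonneg_right (hhead s hs) hε.le
  have hrem : |exp (b * δ) / b| ≤ exp (-(c * δ / ε)) * (ε / c) := by
    rw [abs_div, abs_of_pos (exp_pos _), abs_of_neg hbneg, div_eq_mul_one_div]
    refine mul_le_mul (exp_le_exp.mpr ?_) hb_inv (one_div_nonneg.mpr (by linarith))
      (exp_pos _).le
    rw [hb, div_mul_eq_mul_div, ← neg_div, ← neg_mul]
    exact div_le_div_of_nonneg_right (mul_le_mul_of_nonneg_right ha hδ0) hε.le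
  have htail' : |∫ s in θ + δ..θ + 1, exp ((f s - f θ) / ε)| ≤ exp (-(c * δ / ε)) := by
    refine (abs_integral_exp_le_of_le (K := -(c * δ / ε)) (by linarith) fun s hs => ?_).trans ?_
    · rw [neg_div']
      exact div_le_div_of_nonneg_right (htail s hs) hε.le
    · exact mul_le_of_le_one_right (exp_pos _).le (by linarith)
  have hsplit : (∫ s in θ..θ + 1, exp ((f s - f θ) / ε)) - ε / (-a) =
      ((∫ s in θ..θ + δ, exp ((f s - f θ) / ε)) - ∫ s in θ..θ + δ, exp (b * (s - θ)))
        + exp (b * δ) / b + ∫ s in θ + δ..θ + 1, exp ((f s - f θ) / ε) := by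
    have hint : Continuous fun s => exp ((f s - f θ) / ε) := by fun_prop
    rw [← integral_add_adjacent_intervals (hint.intervalIntegrable θ (θ + δ))
      (hint.intervalIntegrable _ _), hlin, hb]
    field_simp
    ring
  have hMδ0 : 0 ≤ M * δ ^ 2 := by simpa using hhead θ (left_mem_Icc.mpr (by linarith))
  have hhead_le : 2 * (M * δ ^ 2 / ε) * ∫ s in θ..θ + δ, exp (b * (s - θ)) ≤ 2 * M * δ ^ 2 / c :=
    calc _ ≤ 2 * (M * δ ^ 2 / ε) * (ε / c) := by gcongr
      _ = 2 * M * δ ^ 2 / c := by field_simp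
  rw [hsplit]
  refine (abs_add_three _ _ _).trans ?_
  linarith

lemma abs_integral_exp_sub_le_mul_log_sq {f : ℝ → ℝ} {a c M ε θ : ℝ} (hf : Continuous f)
    (hc : 0 < c) (ha : a ≤ -c) (hε : 0 < ε)
    (htaylor : ∀ s, |f s - f θ - a * (s - θ)| ≤ M * (s - θ) ^ 2)
    (hdecr : ∀ s, θ ≤ s → f s - f θ ≤ -c * (s - θ)) (hL : 1 ≤ log (1 / ε))
    (hsmall₁ : 2 * (ε * log (1 / ε) ^ 2) ≤ c) (hsmall₂ : 4 * M * (ε * log (1 / ε) ^ 2) ≤ c ^ 2) :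
    |(∫ s in θ..θ + 1, exp ((f s - f θ) / ε)) - ε / (-a)| ≤
      (8 * M / c ^ 3 + 2) * ε ^ 2 * log (1 / ε) ^ 2 := by
  set L := log (1 / ε) with hLdef
  have hM : 0 ≤ M := by simpa using (abs_nonneg _).trans (htaylor (θ + 1))
  have hεL : ε * L ≤ ε * L ^ 2 := by gcongr; nlinarith
  -- `δ` is chosen so that `exp (-(c * δ / ε)) = ε ^ 2` bounds the tail of the integral
  set δ := 2 * ε * L / c with hδ
  have hδ0 : 0 ≤ δ := by positivity
  have hδ1 : δ ≤ 1 := by rw [hδ, div_le_one hc]; linarith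
  have hMδ : M * δ ^ 2 ≤ ε := by
    have : M * δ ^ 2 = ε * (4 * M * (ε * L ^ 2)) / c ^ 2 := by rw [hδ]; field_simp; ring
    rw [this, div_le_iff₀ (by positivity)]
    exact mul_le_mul_of_nonneg_left hsmall₂ hε.le
  have hexp : exp (-(c * δ / ε)) = ε ^ 2 := by
    have hLε : L = -log ε := by rw [hLdef, one_div, log_inv]
    have : -(c * δ / ε) = log (ε ^ 2) := by
      rw [log_pow, hδ, hLε]; field_simp; push_cast; ring
    rw [this, exp_log (by positivity)]
  have hbound := abs_integral_exp_sub_le_of_head_tail hf hc ha hε hδ0 hδ1 hMδ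
    (fun s hs => (htaylor s).trans (by gcongr <;> linarith [hs.1, hs.2]))
    (fun s hs => (hdecr s (by linarith [hs.1])).trans (by nlinarith [hs.1]))
  have hεc : ε / c ≤ 1 := by rw [div_le_one hc]; nlinarith
  calc _ ≤ 2 * M * δ ^ 2 / c + exp (-(c * δ / ε)) * (ε / c + 1) := hbound
    _ ≤ 8 * M / c ^ 3 * (ε ^ 2 * L ^ 2) + 2 * ε ^ 2 := by
      have hfirst : 2 * M * (2 * ε * L / c) ^ 2 / c = 8 * M / c ^ 3 * (ε ^ 2 * L ^ 2) := by
        field_simp; ring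
      rw [hexp, hδ, hfirst]
      nlinarith [mul_le_mul_of_nonneg_left hεc (sq_nonneg ε)]
    _ ≤ (8 * M / c ^ 3 + 2) * ε ^ 2 * L ^ 2 := by nlinarith

/-- Laplace-type asymptotics: if `Ω` is `C²` with `|Ω'| ≤ M`, `|Ω''| ≤ M` and `Ω' ≤ -c₀ < 0`,
then `∫_θ^{θ+1} e^{(Ω(s)-Ω(θ))/ε} ds = ε/(-Ω'(θ)) + O(ε² (log(1/ε))²)`, with constants
depending only on `M` and `c₀`. -/
theorem laplace_asymptotics_decreasing_phase
    (M c₀ : ℝ) (hM : 0 < M) (hc₀ : 0 < c₀) :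
    ∃ C > (0:ℝ), ∃ ε₀ > (0:ℝ), ∀ Ω : ℝ → ℝ, ContDiff ℝ 2 Ω →
      (∀ θ, |deriv Ω θ| ≤ M) → (∀ θ, |deriv (deriv Ω) θ| ≤ M) →
      (∀ θ, deriv Ω θ ≤ -c₀) →
      ∀ ε ∈ Set.Ioo (0:ℝ) ε₀, ∀ θ : ℝ,
        |(∫ s in θ..(θ + 1), Real.exp ((Ω s - Ω θ) / ε)) - ε / (-(deriv Ω θ))| ≤
          C * ε ^ 2 * (Real.log (1 / ε)) ^ 2 := by
  have hsmall : ∀ᶠ ε in 𝓝[>] (0 : ℝ), 1 ≤ log (1 / ε) ∧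
      2 * (ε * log (1 / ε) ^ 2) ≤ c₀ ∧ 4 * M * (ε * log (1 / ε) ^ 2) ≤ c₀ ^ 2 :=
    eventually_one_le_log_inv.and <|
      ((tendsto_mul_log_inv_sq.const_mul 2).eventually_le_const (by simpa using hc₀)).and
        ((tendsto_mul_log_inv_sq.const_mul (4 * M)).eventually_le_const
          (by simpa using pow_pos hc₀ 2))
  obtain ⟨ε₀, hε₀, hε₀small⟩ := (nhdsGT_basis (0 : ℝ)).eventually_iff.mp hsmall
  refine ⟨8 * M / c₀ ^ 3 + 2, by positivity, ε₀, hε₀, fun Ω hΩ _ hΩ'' hΩ' ε hε θ => ?_⟩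
  obtain ⟨hL, hsmall₁, hsmall₂⟩ := hε₀small hε
  exact abs_integral_exp_sub_le_mul_log_sq hΩ.continuous hc₀ (hΩ' θ) hε.1
    (abs_sub_sub_deriv_mul_le hΩ hΩ'' θ)
    (fun s hs => image_sub_le_mul_sub_of_deriv_le (hΩ.differentiable two_ne_zero) hΩ' hs)
    hL hsmall₁ hsmall₂
end

section
/- Let W : ℝ → ℝ be three times continuously differentiable with W(0) = 0, W′(0) = 0, c ≤ W″(x) ≤ C and |W‴(x)| ≤ C for all x ∈ ℝ (with 0 < c ≤ C), and let g : ℝ → ℝ be Lipschitz with c ≤ g(x) ≤ C for all x. Then there exist C′ > 0 and ε₀ > 0 such that for all ε ∈ (0, ε₀): |∫_ℝ g(x)⁻²·e^{−W(x)/ε} dx − g(0)⁻²·√(2πε/W″(0))| ≤ C′·ε·(log(1/ε))^{3/2}. -/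
/-!
Compare `e^{-W/ε}` with the Gaussian `e^{-W''(0) x²/(2ε)}`, whose integral is `√(2πε/W''(0))`.
Since `W'' ≥ c`, both exponents are at least `c x²/(2ε)`, so the two exponentials differ by at
most `|W x - W''(0) x²/2| / ε ≤ C |x|³/(6ε)` times `e^{-c x²/(2ε)}`; likewise `g⁻²` is Lipschitz
and contributes at most a multiple of `|x| e^{-c x²/(2ε)}`. The absolute Gaussian moments
`∫ |x|ⁿ e^{-b x²} = Γ((n+1)/2) b^{-(n+1)/2}` turn both errors into `O(ε)`, which is stronger than
the claimed `O(ε (log 1/ε)^{3/2})`.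
-/

open MeasureTheory Real
open scoped NNReal

theorem norm_le_of_hasDerivAt_of_norm_le_pow {E : Type*} [NormedAddCommGroup E]
    [NormedSpace ℝ E] {f f' : ℝ → E} {K : ℝ} {n : ℕ} (hf : ∀ x, HasDerivAt f (f' x) x)
    (h0 : f 0 = 0) (hf' : ∀ x, ‖f' x‖ ≤ K * |x| ^ n) (x : ℝ) :
    ‖f x‖ ≤ K * |x| ^ (n + 1) / (n + 1) := by
  wlog hx : 0 ≤ x generalizing f f' x
  · have := this (f := fun t => f (-t)) (f' := fun t => -f' (-t))
      (fun t => by simpa [Function.comp_def] using (hf (-t)).scomp t (hasDerivAt_neg t))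
      (by simpa using h0) (fun t => by simpa using hf' (-t)) (-x) (by linarith)
    simpa using this
  have hB : ∀ t, HasDerivAt (fun t : ℝ => K * t ^ (n + 1) / (n + 1)) (K * t ^ n) t := fun t => by
    refine (((hasDerivAt_pow (n + 1) t).const_mul K).div_const ((n : ℝ) + 1)).congr_deriv ?_
    push_cast
    field_simp
  rw [abs_of_nonneg hx]
  exact image_norm_le_of_norm_deriv_right_le_deriv_boundary
    (fun t _ => (hf t).continuousAt.continuousWithinAt) (fun t _ => (hf t).hasDerivWithinAt)
    (by simp [h0]) hB (fun t ht => by simpa [abs_of_nonneg ht.1] using hf' t) ⟨hx, le_rfl⟩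

theorem nonneg_of_hasDerivAt_of_monotone {f f' : ℝ → ℝ} (hf : ∀ x, HasDerivAt f (f' x) x)
    (hf' : Monotone f') (h0 : f 0 = 0) (h'0 : f' 0 = 0) (x : ℝ) : 0 ≤ f x := by
  rcases lt_trichotomy x 0 with hx | rfl | hx
  · obtain ⟨ξ, hξ, hslope⟩ := exists_hasDerivAt_eq_slope f f' hx
      (fun t _ => (hf t).continuousAt.continuousWithinAt) (fun t _ => hf t)
    have : f' ξ ≤ 0 := h'0 ▸ hf' hξ.2.le
    rw [hslope, h0, div_nonpos_iff] at this
    rcases this with h | h <;> linarith [h.1, h.2]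
  · exact h0.ge
  · obtain ⟨ξ, hξ, hslope⟩ := exists_hasDerivAt_eq_slope f f' hx
      (fun t _ => (hf t).continuousAt.continuousWithinAt) (fun t _ => hf t)
    have : 0 ≤ f' ξ := h'0 ▸ hf' hξ.1.le
    rw [hslope, h0, sub_zero, sub_zero] at this
    exact (div_nonneg_iff.1 this).elim (·.1) fun h => absurd h.2 hx.not_ge

section SecondOrder

variable {W W' W'' : ℝ → ℝ} (hW : ∀ x, HasDerivAt W (W' x) x)
  (hW' : ∀ x, HasDerivAt W' (W'' x) x)
include hW hW'

theorem abs_sub_taylor_two_le_of_abs_third_deriv_le {W''' : ℝ → ℝ} {C : ℝ}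
    (hW'' : ∀ x, HasDerivAt W'' (W''' x) x) (hC : ∀ x, |W''' x| ≤ C) (x : ℝ) :
    |W x - (W 0 + W' 0 * x + W'' 0 * x ^ 2 / 2)| ≤ C * |x| ^ 3 / 6 := by
  have h2 : ∀ t, |W'' t - W'' 0| ≤ C * |t| := fun t => by
    simpa using norm_le_of_hasDerivAt_of_norm_le_pow (n := 0) (f := fun t => W'' t - W'' 0)
      (fun t => (hW'' t).sub_const _) (sub_self _) (fun t => by simpa using hC t) t
  have h1 : ∀ t, |W' t - (W' 0 + W'' 0 * t)| ≤ C * |t| ^ 2 / 2 := fun t => by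
    have := norm_le_of_hasDerivAt_of_norm_le_pow (n := 1)
      (f := fun t => W' t - (W' 0 + W'' 0 * t)) (f' := fun t => W'' t - W'' 0)
      (fun t => ((hW' t).sub (((hasDerivAt_id t).const_mul _).const_add _)).congr_deriv
        (by simp))
      (by simp) (fun t => by simpa using h2 t) t
    norm_num at this
    rwa [sq_abs]
  have := norm_le_of_hasDerivAt_of_norm_le_pow (n := 2) (K := C / 2)
    (f := fun t => W t - (W 0 + W' 0 * t + W'' 0 * t ^ 2 / 2))
    (f' := fun t => W' t - (W' 0 + W'' 0 * t))
    (fun t => ((hW t).sub ((((hasDerivAt_id t).const_mul _).const_add _).add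
      (((hasDerivAt_pow 2 t).const_mul _).div_const 2))).congr_deriv (by simp; ring))
    (by simp) (fun t => by simpa [mul_div_right_comm] using h1 t) x
  norm_num at this
  linarith

theorem quadratic_le_of_le_second_deriv {c : ℝ} (hc : ∀ x, c ≤ W'' x) (x : ℝ) :
    W 0 + W' 0 * x + c * x ^ 2 / 2 ≤ W x := by
  have hmono : Monotone fun t => W' t - (W' 0 + c * t) :=
    monotone_of_hasDerivAt_nonneg
      (fun t => (hW' t).sub (((hasDerivAt_id t).const_mul c).const_add _))
      (fun t => by simpa using hc t)
  have := nonneg_of_hasDerivAt_of_monotone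
    (f := fun t => W t - (W 0 + W' 0 * t + c * t ^ 2 / 2))
    (fun t => ((hW t).sub ((((hasDerivAt_id t).const_mul _).const_add _).add
      (((hasDerivAt_pow 2 t).const_mul c).div_const 2))).congr_deriv (by simp; ring))
    hmono (by simp) (by simp) x
  linarith

end SecondOrder

theorem abs_exp_neg_sub_exp_neg_le {u v m : ℝ} (hu : m ≤ u) (hv : m ≤ v) :
    |exp (-u) - exp (-v)| ≤ |u - v| * exp (-m) := by
  wlog huv : u ≤ v generalizing u v
  · rw [abs_sub_comm, abs_sub_comm u]
    exact this hv hu (le_of_not_ge huv)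
  have hexp : exp (-u) - exp (-v) = exp (-u) * (1 - exp (-(v - u))) := by
    rw [mul_sub, ← exp_add]; ring_nf
  rw [abs_sub_comm u, abs_of_nonneg (sub_nonneg.2 huv),
    abs_of_nonneg (sub_nonneg.2 (exp_le_exp.2 (neg_le_neg huv))), hexp, mul_comm (v - u)]
  exact mul_le_mul (exp_le_exp.2 (neg_le_neg hu)) (by linarith [one_sub_le_exp_neg (v - u)])
    (sub_nonneg.2 (exp_le_one_iff.2 (by linarith))) (exp_pos _).le

theorem integrable_abs_pow_mul_exp_neg_mul_sq {b : ℝ} (hb : 0 < b) (n : ℕ) :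
    Integrable fun x : ℝ => |x| ^ n * exp (-b * x ^ 2) := by
  refine (integrable_rpow_mul_exp_neg_mul_sq hb (s := n)
    (by linarith [n.cast_nonneg (α := ℝ)])).norm.congr (Filter.Eventually.of_forall fun x => ?_)
  simp [abs_of_pos (exp_pos _)]

theorem integral_abs_pow_mul_exp_neg_mul_sq {b : ℝ} (hb : 0 < b) (n : ℕ) :
    ∫ x : ℝ, |x| ^ n * exp (-b * x ^ 2) = b ^ (-((n : ℝ) + 1) / 2) * Gamma ((n + 1) / 2) := by
  have h := integral_comp_abs (f := fun t : ℝ => t ^ n * exp (-b * t ^ 2))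
  have h' := integral_rpow_mul_exp_neg_mul_rpow two_pos
    (by linarith [n.cast_nonneg (α := ℝ)]) hb (q := n)
  simp only [rpow_natCast, rpow_two] at h'
  simp only [sq_abs] at h
  rw [h, h']
  ring

theorem abs_integral_mul_exp_neg_sub_le {ρ φ : ℝ → ℝ} {a b A B : ℝ}
    (hρ : AEStronglyMeasurable ρ) (hφ : AEStronglyMeasurable φ) (hb : 0 < b) (hba : b ≤ a)
    (hρ_lip : ∀ x, |ρ x - ρ 0| ≤ A * |x|) (hφ_ge : ∀ x, b * x ^ 2 ≤ φ x)
    (hφ_sub : ∀ x, |φ x - a * x ^ 2| ≤ B * |x| ^ 3) :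
    |(∫ x, ρ x * exp (-φ x)) - ρ 0 * √(π / a)| ≤ A / b + |ρ 0| * B / b ^ 2 := by
  have hpt : ∀ x, |ρ x * exp (-φ x) - ρ 0 * exp (-a * x ^ 2)| ≤
      A * (|x| ^ 1 * exp (-b * x ^ 2)) + |ρ 0| * B * (|x| ^ 3 * exp (-b * x ^ 2)) := fun x => by
    have hax : b * x ^ 2 ≤ a * x ^ 2 := by gcongr
    have hexp : exp (-φ x) ≤ exp (-(b * x ^ 2)) := exp_le_exp.2 (neg_le_neg (hφ_ge x))
    calc |ρ x * exp (-φ x) - ρ 0 * exp (-a * x ^ 2)|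
        = |(ρ x - ρ 0) * exp (-φ x) + ρ 0 * (exp (-φ x) - exp (-(a * x ^ 2)))| := by
          rw [neg_mul]; congr 1; ring
      _ ≤ |ρ x - ρ 0| * exp (-φ x) + |ρ 0| * (|φ x - a * x ^ 2| * exp (-(b * x ^ 2))) := by
        refine (abs_add_le _ _).trans ?_
        rw [abs_mul, abs_mul, abs_of_pos (exp_pos _)]
        gcongr
        exact abs_exp_neg_sub_exp_neg_le (hφ_ge x) hax
      _ ≤ A * |x| * exp (-(b * x ^ 2)) + |ρ 0| * (B * |x| ^ 3 * exp (-(b * x ^ 2))) :=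
        add_le_add (mul_le_mul (hρ_lip x) hexp (exp_pos _).le ((abs_nonneg _).trans (hρ_lip x)))
          (mul_le_mul_of_nonneg_left (mul_le_mul_of_nonneg_right (hφ_sub x) (exp_pos _).le)
            (abs_nonneg _))
      _ = A * (|x| ^ 1 * exp (-b * x ^ 2)) + |ρ 0| * B * (|x| ^ 3 * exp (-b * x ^ 2)) := by
        ring_nf
  have hm1 := (integrable_abs_pow_mul_exp_neg_mul_sq hb 1).const_mul A
  have hm3 := (integrable_abs_pow_mul_exp_neg_mul_sq hb 3).const_mul (|ρ 0| * B)
  have hgauss : Integrable fun x => ρ 0 * exp (-a * x ^ 2) :=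
    (integrable_exp_neg_mul_sq (hb.trans_le hba)).const_mul _
  have hdiff : Integrable fun x => ρ x * exp (-φ x) - ρ 0 * exp (-a * x ^ 2) :=
    (hm1.add hm3).mono' ((hρ.mul (continuous_exp.comp_aestronglyMeasurable hφ.neg)).sub
      hgauss.1) (ae_of_all _ hpt)
  have hint : Integrable fun x => ρ x * exp (-φ x) :=
    (hdiff.add hgauss).congr (ae_of_all _ fun x => sub_add_cancel _ _)
  calc |(∫ x, ρ x * exp (-φ x)) - ρ 0 * √(π / a)|
      = |∫ x, (ρ x * exp (-φ x) - ρ 0 * exp (-a * x ^ 2))| := by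
        rw [integral_sub hint hgauss, integral_const_mul, integral_gaussian]
    _ ≤ ∫ x, |ρ x * exp (-φ x) - ρ 0 * exp (-a * x ^ 2)| := abs_integral_le_integral_abs
    _ ≤ ∫ x, (A * (|x| ^ 1 * exp (-b * x ^ 2)) + |ρ 0| * B * (|x| ^ 3 * exp (-b * x ^ 2))) :=
        integral_mono hdiff.abs (hm1.add hm3) hpt
    _ = A / b + |ρ 0| * B / b ^ 2 := by
        rw [integral_add hm1 hm3, integral_const_mul, integral_const_mul,
          integral_abs_pow_mul_exp_neg_mul_sq hb, integral_abs_pow_mul_exp_neg_mul_sq hb]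
        norm_num [rpow_neg hb.le, rpow_neg_one]
        ring

theorem abs_integral_mul_exp_neg_div_sub_le {ρ W : ℝ → ℝ} {a c A C ε : ℝ}
    (hρ : AEStronglyMeasurable ρ) (hW : AEStronglyMeasurable W) (hc : 0 < c) (hca : c ≤ a)
    (hε : 0 < ε) (hρ_lip : ∀ x, |ρ x - ρ 0| ≤ A * |x|) (hW_ge : ∀ x, c * x ^ 2 / 2 ≤ W x)
    (hW_sub : ∀ x, |W x - a * x ^ 2 / 2| ≤ C * |x| ^ 3 / 6) :
    |(∫ x, ρ x * exp (-W x / ε)) - ρ 0 * √(2 * π * ε / a)| ≤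
      (2 * A / c + 2 * |ρ 0| * C / (3 * c ^ 2)) * ε := by
  have hφ_ge : ∀ x, c / (2 * ε) * x ^ 2 ≤ W x / ε := fun x =>
    calc c / (2 * ε) * x ^ 2 = c * x ^ 2 / 2 / ε := by ring
      _ ≤ W x / ε := by gcongr; exact hW_ge x
  have hφ_sub : ∀ x, |W x / ε - a / (2 * ε) * x ^ 2| ≤ C / (6 * ε) * |x| ^ 3 := fun x =>
    calc |W x / ε - a / (2 * ε) * x ^ 2| = |W x - a * x ^ 2 / 2| / ε := by
          rw [show W x / ε - a / (2 * ε) * x ^ 2 = (W x - a * x ^ 2 / 2) / ε by ring, abs_div,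
            abs_of_pos hε]
      _ ≤ C * |x| ^ 3 / 6 / ε := by gcongr; exact hW_sub x
      _ = C / (6 * ε) * |x| ^ 3 := by ring
  have h := abs_integral_mul_exp_neg_sub_le hρ (by fun_prop) (by positivity) (by gcongr)
    hρ_lip hφ_ge hφ_sub
  have hsqrt : π / (a / (2 * ε)) = 2 * π * ε / a := by field_simp
  simp only [neg_div, hsqrt] at h ⊢
  convert h using 1
  field_simp
  ring

theorem abs_inv_sq_sub_inv_sq_le {c s t : ℝ} (hc : 0 < c) (hs : c ≤ s) (ht : c ≤ t) :
    |(s ^ 2)⁻¹ - (t ^ 2)⁻¹| ≤ 2 / c ^ 3 * |s - t| := by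
  have hs0 : 0 < s := hc.trans_le hs
  have ht0 : 0 < t := hc.trans_le ht
  have key : (s ^ 2)⁻¹ - (t ^ 2)⁻¹ = ((s * t ^ 2)⁻¹ + (s ^ 2 * t)⁻¹) * (t - s) := by
    field_simp; ring
  have hc3 : ∀ y z, c ≤ y → c ≤ z → (y * z ^ 2)⁻¹ ≤ (c ^ 3)⁻¹ := fun y z hy hz => by
    have := hc.trans_le hy
    apply inv_anti₀ (by positivity)
    calc c ^ 3 = c * c ^ 2 := by ring
      _ ≤ y * z ^ 2 := by gcongr
  rw [key, abs_mul, abs_sub_comm, abs_of_pos (by positivity)]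
  gcongr
  calc (s * t ^ 2)⁻¹ + (s ^ 2 * t)⁻¹ ≤ (c ^ 3)⁻¹ + (c ^ 3)⁻¹ :=
        add_le_add (hc3 s t hs ht) (mul_comm t (s ^ 2) ▸ hc3 t s ht hs)
    _ = 2 / c ^ 3 := by ring

theorem LipschitzWith.abs_inv_sq_sub_inv_sq_le {g : ℝ → ℝ} {L : ℝ≥0} {c : ℝ}
    (hg : LipschitzWith L g) (hc : 0 < c) (hgc : ∀ x, c ≤ g x) (x y : ℝ) :
    |(g x ^ 2)⁻¹ - (g y ^ 2)⁻¹| ≤ 2 * L / c ^ 3 * |x - y| := by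
  have := hg.dist_le_mul x y
  rw [Real.dist_eq, Real.dist_eq] at this
  calc _ ≤ 2 / c ^ 3 * |g x - g y| := _root_.abs_inv_sq_sub_inv_sq_le hc (hgc x) (hgc y)
    _ ≤ 2 / c ^ 3 * (L * |x - y|) := by gcongr
    _ = 2 * L / c ^ 3 * |x - y| := by ring

theorem self_le_mul_log_one_div_rpow {ε p : ℝ} (hε : 0 < ε) (hε₁ : ε ≤ exp (-1))
    (hp : 0 ≤ p) : ε ≤ ε * log (1 / ε) ^ p := by
  have hlog : 1 ≤ log (1 / ε) := by
    have := log_le_log hε hε₁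
    rw [log_exp] at this
    rw [one_div, log_inv]
    linarith
  exact le_mul_of_one_le_right hε.le (one_le_rpow hlog hp)

theorem laplace_normalizing_constant_general
    (c C : ℝ) (hc : 0 < c)
    (W g : ℝ → ℝ) (hW : ContDiff ℝ 3 W) (hW0 : W 0 = 0) (hW'0 : deriv W 0 = 0)
    (hW''c : ∀ x, c ≤ deriv (deriv W) x)
    (hW''' : ∀ x, |deriv (deriv (deriv W)) x| ≤ C)
    (L : ℝ≥0) (hg : LipschitzWith L g) (hgc : ∀ x, c ≤ g x) :
    ∃ C' > (0:ℝ), ∃ ε₀ > (0:ℝ), ∀ ε ∈ Set.Ioo (0:ℝ) ε₀,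
      |(∫ x : ℝ, ((g x) ^ 2)⁻¹ * Real.exp (-W x / ε)) -
          ((g 0) ^ 2)⁻¹ * Real.sqrt (2 * Real.pi * ε / deriv (deriv W) 0)| ≤
        C' * ε * (Real.log (1 / ε)) ^ ((3:ℝ) / 2) := by
  have hD1 : ∀ x, HasDerivAt W (deriv W x) x := fun x =>
    (hW.differentiable (by norm_num) x).hasDerivAt
  have hD2 : ∀ x, HasDerivAt (deriv W) (deriv (deriv W) x) x := fun x =>
    ((hW.deriv' (n := 2)).differentiable (by norm_num) x).hasDerivAt
  have hD3 : ∀ x, HasDerivAt (deriv (deriv W)) (deriv (deriv (deriv W)) x) x := fun x =>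
    (((hW.deriv' (n := 2)).deriv' (n := 1)).differentiable (by norm_num) x).hasDerivAt
  have hW_ge : ∀ x, c * x ^ 2 / 2 ≤ W x := by
    simpa [hW0, hW'0] using quadratic_le_of_le_second_deriv hD1 hD2 hW''c
  have hW_sub : ∀ x, |W x - deriv (deriv W) 0 * x ^ 2 / 2| ≤ C * |x| ^ 3 / 6 := by
    simpa [hW0, hW'0] using abs_sub_taylor_two_le_of_abs_third_deriv_le hD1 hD2 hD3 hW'''
  have hρ : Continuous fun x => (g x ^ 2)⁻¹ :=
    (hg.continuous.pow 2).inv₀ fun x => pow_ne_zero 2 (hc.trans_le (hgc x)).ne'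
  have hρ0 : |(g 0 ^ 2)⁻¹| ≤ (c ^ 2)⁻¹ := by
    rw [abs_of_pos (by have := hc.trans_le (hgc 0); positivity)]
    exact inv_anti₀ (by positivity) (pow_le_pow_left₀ hc.le (hgc 0) 2)
  have hC : 0 ≤ C := (abs_nonneg _).trans (hW''' 0)
  set M := 4 * L / c ^ 4 + 2 * C / (3 * c ^ 4) with hM
  refine ⟨M + 1, by positivity, exp (-1), exp_pos _, fun ε ⟨hε, hε₁⟩ => ?_⟩
  calc _ ≤ (2 * (2 * L / c ^ 3) / c + 2 * |(g 0 ^ 2)⁻¹| * C / (3 * c ^ 2)) * ε :=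
        abs_integral_mul_exp_neg_div_sub_le hρ.aestronglyMeasurable
          hW.continuous.aestronglyMeasurable hc (hW''c 0) hε
          (fun x => by simpa using hg.abs_inv_sq_sub_inv_sq_le hc hgc x 0) hW_ge hW_sub
    _ ≤ (2 * (2 * L / c ^ 3) / c + 2 * (c ^ 2)⁻¹ * C / (3 * c ^ 2)) * ε := by gcongr
    _ = M * ε := by rw [hM]; field_simp; ring
    _ ≤ (M + 1) * (ε * log (1 / ε) ^ ((3 : ℝ) / 2)) :=
        mul_le_mul (by linarith) (self_le_mul_log_one_div_rpow hε hε₁.le (by norm_num)) hε.le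
          (by positivity)
    _ = _ := by ring

/-- Laplace method for the normalizing constant of the invariant density:
`∫_ℝ g(x)⁻² e^{-W(x)/ε} dx = g(0)⁻² √(2πε/W''(0)) + O(ε (log(1/ε))^{3/2})`. -/
theorem laplace_normalizing_constant
    (c C : ℝ) (hc : 0 < c) (hcC : c ≤ C)
    (W g : ℝ → ℝ) (hW : ContDiff ℝ 3 W) (hW0 : W 0 = 0) (hW'0 : deriv W 0 = 0)
    (hW''c : ∀ x, c ≤ deriv (deriv W) x) (hW''C : ∀ x, deriv (deriv W) x ≤ C)
    (hW''' : ∀ x, |deriv (deriv (deriv W)) x| ≤ C)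
    (L : ℝ≥0) (hg : LipschitzWith L g) (hgc : ∀ x, c ≤ g x) (hgC : ∀ x, g x ≤ C) :
    ∃ C' > (0:ℝ), ∃ ε₀ > (0:ℝ), ∀ ε ∈ Set.Ioo (0:ℝ) ε₀,
      |(∫ x : ℝ, ((g x) ^ 2)⁻¹ * Real.exp (-W x / ε)) -
          ((g 0) ^ 2)⁻¹ * Real.sqrt (2 * Real.pi * ε / deriv (deriv W) 0)| ≤
        C' * ε * (Real.log (1 / ε)) ^ ((3:ℝ) / 2) :=
  laplace_normalizing_constant_general c C hc W g hW hW0 hW'0 hW''c hW''' L hg hgc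
end

section
/- Let μ and ν be Borel probability measures on ℝ, let ε > 0, and for n ∈ ℤ let I_n = [nε, (n+1)ε). Then there exists a Borel probability measure γ on ℝ × ℝ whose first marginal is μ and whose second marginal is ν, such that γ({(x,y) : |x − y| ≥ ε}) ≤ (1/2)·Σ_{n∈ℤ} |μ(I_n) − ν(I_n)|. -/
/-!
Within each bin `I n` the common mass `min (μ (I n)) (ν (I n))` is coupled by a product measure
carried by `I n ×ˢ I n`, so these pairs are at distance `< ε`. The leftover masses
`μ (I n) - ν (I n)` and `ν (I n) - μ (I n)` (truncated subtraction) have the same total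
`s = ½ ∑ |μ (I n) - ν (I n)|`, because `μ` and `ν` have the same mass; they are coupled
independently, and only this part can put mass on pairs at distance `≥ ε`.
-/

open Function MeasureTheory Set

open scoped ENNReal

namespace ENNReal

variable {ι : Type*}

theorem abs_toReal_sub_toReal {a b : ℝ≥0∞} (ha : a ≠ ∞) (hb : b ≠ ∞) :
    |a.toReal - b.toReal| = ((a - b) + (b - a)).toReal := by
  rcases le_total a b with h | h
  · rw [tsub_eq_zero_of_le h, zero_add, ENNReal.toReal_sub_of_le h hb, abs_sub_comm,
      abs_of_nonneg (sub_nonneg.mpr (ENNReal.toReal_mono hb h))]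
  · rw [tsub_eq_zero_of_le h, add_zero, ENNReal.toReal_sub_of_le h ha,
      abs_of_nonneg (sub_nonneg.mpr (ENNReal.toReal_mono ha h))]

theorem tsum_tsub_comm {a b : ι → ℝ≥0∞} (h : ∑' n, a n = ∑' n, b n) (hfin : ∑' n, a n ≠ ∞) :
    ∑' n, (a n - b n) = ∑' n, (b n - a n) := by
  have hmin : ∑' n, min (a n) (b n) ≠ ∞ :=
    ne_top_of_le_ne_top hfin (ENNReal.tsum_le_tsum fun n => min_le_left _ _)
  have ha : ∑' n, (a n - b n) + ∑' n, min (a n) (b n) = ∑' n, a n := by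
    rw [← ENNReal.tsum_add]
    exact tsum_congr fun n => tsub_add_min
  have hb : ∑' n, (b n - a n) + ∑' n, min (a n) (b n) = ∑' n, b n := by
    rw [← ENNReal.tsum_add]
    exact tsum_congr fun n => min_comm (a n) (b n) ▸ tsub_add_min
  exact (ENNReal.add_left_inj hmin).mp (ha.trans (h.trans hb.symm))

theorem tsum_abs_toReal_sub_toReal {a b : ι → ℝ≥0∞} (h : ∑' n, a n = ∑' n, b n)
    (hfin : ∑' n, a n ≠ ∞) :
    ∑' n, |(a n).toReal - (b n).toReal| = 2 * (∑' n, (a n - b n)).toReal := by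
  have hb : ∑' n, b n ≠ ∞ := h ▸ hfin
  have hterm n : a n - b n + (b n - a n) ≠ ∞ :=
    ENNReal.add_ne_top.mpr ⟨ne_top_of_le_ne_top (ENNReal.ne_top_of_tsum_ne_top hfin n) tsub_le_self,
      ne_top_of_le_ne_top (ENNReal.ne_top_of_tsum_ne_top hb n) tsub_le_self⟩
  rw [tsum_congr fun n => abs_toReal_sub_toReal (ENNReal.ne_top_of_tsum_ne_top hfin n)
      (ENNReal.ne_top_of_tsum_ne_top hb n), ← ENNReal.tsum_toReal_eq hterm, ENNReal.tsum_add,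
    ← tsum_tsub_comm h hfin, ← two_mul, ENNReal.toReal_mul, ENNReal.toReal_ofNat]

end ENNReal

namespace MeasureTheory.Measure

variable {α β : Type*} [MeasurableSpace α] [MeasurableSpace β]

noncomputable def rescale (ρ : Measure α) (t : ℝ≥0∞) : Measure α := (t / ρ univ) • ρ

theorem rescale_apply_univ (ρ : Measure α) [IsFiniteMeasure ρ] {t : ℝ≥0∞} (ht : t ≤ ρ univ) :
    ρ.rescale t univ = t := by
  rcases eq_or_ne (ρ univ) 0 with h0 | h0
  · simp [rescale, h0, le_zero_iff.mp (h0 ▸ ht)]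
  · simp [rescale, ENNReal.div_mul_cancel h0 (measure_ne_top ρ univ)]

theorem isFiniteMeasure_rescale (ρ : Measure α) [IsFiniteMeasure ρ] {t : ℝ≥0∞}
    (ht : t ≤ ρ univ) : IsFiniteMeasure (ρ.rescale t) :=
  ⟨by rw [rescale_apply_univ ρ ht]; exact ht.trans_lt (measure_lt_top ρ univ)⟩

theorem rescale_add_rescale (ρ : Measure α) [IsFiniteMeasure ρ] {t u : ℝ≥0∞}
    (h : t + u = ρ univ) : ρ.rescale t + ρ.rescale u = ρ := by
  rcases eq_or_ne (ρ univ) 0 with h0 | h0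
  · simp [rescale, measure_univ_eq_zero.mp h0]
  · rw [rescale, rescale, ← add_smul, ENNReal.div_add_div_same, h,
      ENNReal.div_self h0 (measure_ne_top ρ univ), one_smul]

theorem rescale_apply_eq_zero {ρ : Measure α} {s : Set α} (t : ℝ≥0∞) (h : ρ s = 0) :
    ρ.rescale t s = 0 := by
  simp [rescale, h]

noncomputable def scaledProd (ρ : Measure α) (σ : Measure β) : Measure (α × β) :=
  (ρ univ)⁻¹ • ρ.prod σ

theorem inv_measure_univ_mul_smul_self (ρ : Measure α) [IsFiniteMeasure ρ] :
    ((ρ univ)⁻¹ * ρ univ) • ρ = ρ := by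
  rcases eq_or_ne (ρ univ) 0 with h0 | h0
  · simp [measure_univ_eq_zero.mp h0]
  · rw [ENNReal.inv_mul_cancel h0 (measure_ne_top ρ univ), one_smul]

variable {ρ : Measure α} {σ : Measure β}

theorem map_fst_scaledProd [IsFiniteMeasure ρ] [IsFiniteMeasure σ] (h : ρ univ = σ univ) :
    (ρ.scaledProd σ).map Prod.fst = ρ := by
  rw [scaledProd, Measure.map_smul, map_fst_prod, smul_smul, ← h, inv_measure_univ_mul_smul_self]

theorem map_snd_scaledProd [IsFiniteMeasure ρ] [IsFiniteMeasure σ] (h : ρ univ = σ univ) :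
    (ρ.scaledProd σ).map Prod.snd = σ := by
  rw [scaledProd, Measure.map_smul, map_snd_prod, smul_smul, h, inv_measure_univ_mul_smul_self]

theorem scaledProd_apply_univ [IsFiniteMeasure ρ] [IsFiniteMeasure σ] (h : ρ univ = σ univ) :
    ρ.scaledProd σ univ = ρ univ := by
  conv_rhs => rw [← map_fst_scaledProd h, map_apply measurable_fst .univ, preimage_univ]

theorem prod_compl_prod_eq_zero [SFinite ρ] [SFinite σ] {s : Set α} {t : Set β} (hs : ρ sᶜ = 0)
    (ht : σ tᶜ = 0) : ρ.prod σ (s ×ˢ t)ᶜ = 0 := by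
  rw [compl_prod_eq_union]
  exact measure_union_null (by rw [prod_prod, hs, zero_mul]) (by rw [prod_prod, ht, mul_zero])

theorem rescale_restrict_apply_compl (ρ : Measure α) {s : Set α} (hs : MeasurableSet s)
    (t : ℝ≥0∞) : (ρ.restrict s).rescale t sᶜ = 0 :=
  rescale_apply_eq_zero t (ae_restrict_mem hs)

theorem scaledProd_compl_prod_eq_zero [SFinite ρ] [SFinite σ] {s : Set α} {t : Set β}
    (hs : ρ sᶜ = 0) (ht : σ tᶜ = 0) : ρ.scaledProd σ (s ×ˢ t)ᶜ = 0 := by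
  rw [scaledProd, smul_apply, prod_compl_prod_eq_zero hs ht, smul_zero]

variable {ι : Type*} {I : ι → Set α}

theorem sum_rescale_restrict_apply_univ (ρ : Measure α) [IsFiniteMeasure ρ] {t : ι → ℝ≥0∞}
    (ht : ∀ n, t n ≤ ρ (I n)) :
    sum (fun n => (ρ.restrict (I n)).rescale (t n)) univ = ∑' n, t n := by
  rw [sum_apply _ .univ]
  exact tsum_congr fun n => rescale_apply_univ _ (by rw [restrict_apply_univ]; exact ht n)

variable [Countable ι]

theorem sum_rescale_restrict_add_sum_rescale_restrict (ρ : Measure α) [IsFiniteMeasure ρ]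
    (hmeas : ∀ n, MeasurableSet (I n)) (hdisj : Pairwise (Disjoint on I))
    (hcover : ⋃ n, I n = univ) {t u : ι → ℝ≥0∞} (htu : ∀ n, t n + u n = ρ (I n)) :
    sum (fun n => (ρ.restrict (I n)).rescale (t n)) +
      sum (fun n => (ρ.restrict (I n)).rescale (u n)) = ρ := by
  conv_rhs => rw [← restrict_univ (μ := ρ), ← hcover, restrict_iUnion hdisj hmeas]
  rw [sum_add_sum]
  exact congrArg sum (funext fun n => rescale_add_rescale _ (by rw [restrict_apply_univ, htu]))

theorem exists_coupling_of_partition (μ ν : Measure α) [IsFiniteMeasure μ] [IsFiniteMeasure ν]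
    (hμν : μ univ = ν univ) (hmeas : ∀ n, MeasurableSet (I n)) (hdisj : Pairwise (Disjoint on I))
    (hcover : ⋃ n, I n = univ) :
    ∃ γ : Measure (α × α), γ.map Prod.fst = μ ∧ γ.map Prod.snd = ν ∧
      γ (⋃ n, I n ×ˢ I n)ᶜ ≤ ∑' n, (μ (I n) - ν (I n)) := by
  have hmass (ρ : Measure α) : ∑' n, ρ (I n) = ρ univ := by
    rw [← measure_iUnion hdisj hmeas, hcover]
  set a := fun n => μ (I n)
  set b := fun n => ν (I n)
  set μd := fun n => (μ.restrict (I n)).rescale (min (a n) (b n))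
  set νd := fun n => (ν.restrict (I n)).rescale (min (a n) (b n))
  set μr := sum fun n => (μ.restrict (I n)).rescale (a n - b n)
  set νr := sum fun n => (ν.restrict (I n)).rescale (b n - a n)
  have hμd_le n : min (a n) (b n) ≤ μ.restrict (I n) univ := by
    rw [restrict_apply_univ]; exact min_le_left _ _
  have hνd_le n : min (a n) (b n) ≤ ν.restrict (I n) univ := by
    rw [restrict_apply_univ]; exact min_le_right _ _
  have (n : ι) : IsFiniteMeasure (μd n) := isFiniteMeasure_rescale _ (hμd_le n)
  have (n : ι) : IsFiniteMeasure (νd n) := isFiniteMeasure_rescale _ (hνd_le n)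
  have hd_univ n : μd n univ = νd n univ := by
    rw [rescale_apply_univ _ (hμd_le n), rescale_apply_univ _ (hνd_le n)]
  have hμr_univ : μr univ = ∑' n, (a n - b n) :=
    sum_rescale_restrict_apply_univ μ fun n => tsub_le_self
  have hνr_univ : νr univ = ∑' n, (b n - a n) :=
    sum_rescale_restrict_apply_univ ν fun n => tsub_le_self
  have hr_univ : μr univ = νr univ := by
    rw [hμr_univ, hνr_univ,
      ENNReal.tsum_tsub_comm (by simp only [a, b, hmass, hμν]) (by simp only [a, hmass]; finiteness)]
  have : IsFiniteMeasure μr := ⟨by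
    rw [hμr_univ]
    exact (ENNReal.tsum_le_tsum fun n => tsub_le_self).trans_lt (by simp only [a, hmass]; finiteness)⟩
  have : IsFiniteMeasure νr := ⟨by rw [← hr_univ]; exact measure_lt_top _ _⟩
  refine ⟨sum (fun n => (μd n).scaledProd (νd n)) + μr.scaledProd νr, ?_, ?_, ?_⟩
  · rw [Measure.map_add _ _ measurable_fst, map_sum measurable_fst.aemeasurable]
    simp_rw [map_fst_scaledProd (hd_univ _), map_fst_scaledProd hr_univ]
    exact sum_rescale_restrict_add_sum_rescale_restrict μ hmeas hdisj hcover
      fun n => by rw [add_comm]; exact tsub_add_min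
  · rw [Measure.map_add _ _ measurable_snd, map_sum measurable_snd.aemeasurable]
    simp_rw [map_snd_scaledProd (hd_univ _), map_snd_scaledProd hr_univ]
    exact sum_rescale_restrict_add_sum_rescale_restrict ν hmeas hdisj hcover
      fun n => by rw [add_comm, min_comm]; exact tsub_add_min
  · have hdiag : sum (fun n => (μd n).scaledProd (νd n)) (⋃ n, I n ×ˢ I n)ᶜ = 0 := by
      refine sum_apply_eq_zero.mpr fun n => measure_mono_null
        (compl_subset_compl.mpr (subset_iUnion (fun n => I n ×ˢ I n) n)) ?_
      exact scaledProd_compl_prod_eq_zero (rescale_restrict_apply_compl μ (hmeas n) _)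
        (rescale_restrict_apply_compl ν (hmeas n) _)
    rw [add_apply, hdiag, zero_add, ← hμr_univ, ← scaledProd_apply_univ hr_univ]
    exact measure_mono (subset_univ _)

end MeasureTheory.Measure

section Binning

variable {R : Type*} [Ring R] [LinearOrder R] [IsStrictOrderedRing R]

theorem iUnion_Ico_intCast_mul [Archimedean R] {ε : R} (hε : 0 < ε) :
    ⋃ n : ℤ, Ico ((n : R) * ε) ((n + 1) * ε) = univ := by
  simpa [zsmul_eq_mul] using iUnion_Ico_zsmul hε

theorem pairwise_disjoint_Ico_intCast_mul (ε : R) :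
    Pairwise (Disjoint on fun n : ℤ => Ico ((n : R) * ε) ((n + 1) * ε)) := by
  simpa [zsmul_eq_mul] using pairwise_disjoint_Ico_zsmul ε

theorem abs_sub_lt_of_mem_Ico {a b x y : R} (hx : x ∈ Ico a b) (hy : y ∈ Ico a b) :
    |x - y| < b - a :=
  abs_sub_lt_iff.mpr ⟨(sub_le_sub_left hy.1 x).trans_lt (sub_lt_sub_right hx.2 a),
    (sub_le_sub_left hx.1 y).trans_lt (sub_lt_sub_right hy.2 a)⟩

end Binning

/-- Binning coupling: two probability measures on `ℝ` can be coupled so that the probability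
that the two coordinates differ by at least `ε` is bounded by half of the total discrepancy of
the masses of the bins `[nε, (n+1)ε)`. -/
theorem exists_binning_coupling
    (μ ν : Measure ℝ) [IsProbabilityMeasure μ] [IsProbabilityMeasure ν]
    (ε : ℝ) (hε : 0 < ε) :
    ∃ γ : Measure (ℝ × ℝ), IsProbabilityMeasure γ ∧
      γ.map Prod.fst = μ ∧ γ.map Prod.snd = ν ∧
      (γ {p : ℝ × ℝ | ε ≤ |p.1 - p.2|}).toReal ≤
        (1 / 2) * ∑' n : ℤ,
          |(μ (Set.Ico ((n : ℝ) * ε) (((n : ℝ) + 1) * ε))).toReal -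
            (ν (Set.Ico ((n : ℝ) * ε) (((n : ℝ) + 1) * ε))).toReal| := by
  let I : ℤ → Set ℝ := fun n => Ico ((n : ℝ) * ε) ((n + 1) * ε)
  have hdisj : Pairwise (Disjoint on I) := pairwise_disjoint_Ico_intCast_mul ε
  have hmass (ρ : Measure ℝ) : ∑' n, ρ (I n) = ρ univ := by
    rw [← measure_iUnion hdisj fun _ => measurableSet_Ico, iUnion_Ico_intCast_mul hε]
  have hfar : {p : ℝ × ℝ | ε ≤ |p.1 - p.2|} ⊆ (⋃ n, I n ×ˢ I n)ᶜ := by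
    rintro ⟨x, y⟩ hxy hmem
    obtain ⟨n, hx, hy⟩ := mem_iUnion.mp hmem
    exact (abs_sub_lt_of_mem_Ico hx hy).not_ge (by simpa [I, add_mul] using hxy)
  obtain ⟨γ, hfst, hsnd, hγ⟩ := Measure.exists_coupling_of_partition μ ν (by simp)
    (fun _ => measurableSet_Ico) hdisj (iUnion_Ico_intCast_mul hε)
  have : IsProbabilityMeasure (γ.map Prod.fst) := hfst ▸ inferInstance
  refine ⟨γ, Measure.isProbabilityMeasure_of_map Prod.fst, hfst, hsnd, ?_⟩
  have hfin : ∑' n, μ (I n) ≠ ∞ := by simp [hmass]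
  calc (γ _).toReal ≤ (∑' n, (μ (I n) - ν (I n))).toReal :=
        ENNReal.toReal_mono (ne_top_of_le_ne_top hfin (ENNReal.tsum_le_tsum fun n => tsub_le_self))
          ((measure_mono hfar).trans hγ)
    _ = 1 / 2 * ∑' n, |(μ (I n)).toReal - (ν (I n)).toReal| := by
      rw [ENNReal.tsum_abs_toReal_sub_toReal (by simp only [hmass, measure_univ]) hfin]
      ring
end

section
/- Let X be a nonempty set, F : X → X a map, λ > 1, M > 0, and let a : X → ℝ satisfy a(p) ≥ λ for all p, and b : X → ℝ satisfy |b(p)| ≤ M for all p. Then the series s(p) = −Σ_{k=0}^∞ b(F^k(p)) / Π_{j=0}^{k} a(F^j(p)) converges absolutely for every p, satisfies |s(p)| ≤ M/(λ−1), and s is the unique bounded function X → ℝ satisfying the invariance equation s(p) = (s(F(p)) − b(p))/a(p) for all p ∈ X. -/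
/-!
Along an orbit the products `∏_{j ≤ k} a(Fʲ p)` grow at least like `λ^(k+1)`, so the series is
dominated by the geometric series `∑ M λ^{-(k+1)} = M/(λ-1)`. Splitting off its first term
gives the invariance equation. The difference `D` of two bounded solutions satisfies
`D p = D(F p) / a p`, hence `|D| ≤ K λ^{-n}` for every `n`, so `D = 0`.
-/

open Finset Filter Topology

namespace CentralSlope

variable {X : Type*} (F : X → X) (a b : X → ℝ)

noncomputable def slopeTerm (p : X) (k : ℕ) : ℝ :=
  b (F^[k] p) / ∏ j ∈ range (k + 1), a (F^[j] p)

theorem slopeTerm_succ (p : X) (k : ℕ) :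
    slopeTerm F a b p (k + 1) = slopeTerm F a b (F p) k / a p := by
  simp only [slopeTerm, prod_range_succ' _ (k + 1), Function.iterate_succ_apply,
    Function.iterate_zero_apply, div_div]

variable {F a b}

theorem pow_le_prod_iterate {lam : ℝ} (hlam : 0 ≤ lam) (ha : ∀ p, lam ≤ a p) (p : X) (n : ℕ) :
    lam ^ n ≤ ∏ j ∈ range n, a (F^[j] p) := by
  simpa using prod_le_prod (fun _ _ => hlam) (fun j _ => ha (F^[j] p)) (s := range n)

theorem abs_slopeTerm_le {lam M : ℝ} (hlam : 0 < lam) (ha : ∀ p, lam ≤ a p)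
    (hb : ∀ p, |b p| ≤ M) (p : X) (k : ℕ) :
    |slopeTerm F a b p k| ≤ M / lam * lam⁻¹ ^ k := by
  have hprod := pow_le_prod_iterate (F := F) hlam.le ha p (k + 1)
  have hprod_pos : 0 < ∏ j ∈ range (k + 1), a (F^[j] p) := (pow_pos hlam _).trans_le hprod
  have hM : 0 ≤ M := (abs_nonneg _).trans (hb p)
  calc |slopeTerm F a b p k| = |b (F^[k] p)| / ∏ j ∈ range (k + 1), a (F^[j] p) := by
        rw [slopeTerm, abs_div, abs_of_pos hprod_pos]
    _ ≤ M / lam ^ (k + 1) := div_le_div₀ hM (hb _) (pow_pos hlam _) hprod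
    _ = M / lam * lam⁻¹ ^ k := by rw [pow_succ', inv_pow, div_mul_eq_div_div, div_eq_mul_inv]

theorem hasSum_div_mul_inv_pow {lam : ℝ} (hlam : 1 < lam) (M : ℝ) :
    HasSum (fun k : ℕ => M / lam * lam⁻¹ ^ k) (M / (lam - 1)) := by
  have hsum : M / (lam - 1) = M / lam * (1 - lam⁻¹)⁻¹ := by
    have : lam - 1 ≠ 0 := by linarith
    rw [show 1 - lam⁻¹ = (lam - 1) / lam by field_simp]
    field_simp
  rw [hsum]
  exact (hasSum_geometric_of_lt_one (by positivity) (inv_lt_one_of_one_lt₀ hlam)).mul_left _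

theorem summable_abs_slopeTerm {lam M : ℝ} (hlam : 1 < lam) (ha : ∀ p, lam ≤ a p)
    (hb : ∀ p, |b p| ≤ M) (p : X) :
    Summable fun k => |slopeTerm F a b p k| :=
  (hasSum_div_mul_inv_pow hlam M).summable.of_nonneg_of_le (fun _ => abs_nonneg _)
    (abs_slopeTerm_le (by linarith) ha hb p)

theorem abs_tsum_slopeTerm_le {lam M : ℝ} (hlam : 1 < lam) (ha : ∀ p, lam ≤ a p)
    (hb : ∀ p, |b p| ≤ M) (p : X) :
    |∑' k, slopeTerm F a b p k| ≤ M / (lam - 1) :=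
  calc |∑' k, slopeTerm F a b p k| ≤ ∑' k, |slopeTerm F a b p k| := by
        simpa only [Real.norm_eq_abs] using
          norm_tsum_le_tsum_norm (f := slopeTerm F a b p) (summable_abs_slopeTerm hlam ha hb p)
    _ ≤ M / (lam - 1) :=
        hasSum_le (abs_slopeTerm_le (by linarith) ha hb p)
          (summable_abs_slopeTerm hlam ha hb p).hasSum (hasSum_div_mul_inv_pow hlam M)

theorem tsum_slopeTerm_eq {lam M : ℝ} (hlam : 1 < lam) (ha : ∀ p, lam ≤ a p)
    (hb : ∀ p, |b p| ≤ M) (p : X) :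
    ∑' k, slopeTerm F a b p k = (b p + ∑' k, slopeTerm F a b (F p) k) / a p := by
  rw [(summable_abs_slopeTerm hlam ha hb p).of_abs.tsum_eq_zero_add, add_div, ← tsum_div_const]
  simp only [slopeTerm_succ]
  simp [slopeTerm]

theorem eq_zero_of_bounded_of_eq_div {lam K : ℝ} (hlam : 1 < lam) (ha : ∀ p, lam ≤ a p)
    {D : X → ℝ} (hK : ∀ p, |D p| ≤ K) (hD : ∀ p, D p = D (F p) / a p) : D = 0 := by
  have hlam0 : 0 < lam := by linarith
  have hdecay : ∀ n p, |D p| ≤ K / lam ^ n := by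
    intro n
    induction n with
    | zero => simpa using hK
    | succ n ih =>
      intro p
      have hK0 : 0 ≤ K := (abs_nonneg _).trans (hK p)
      calc |D p| = |D (F p)| / a p := by rw [hD p, abs_div, abs_of_pos (hlam0.trans_le (ha p))]
        _ ≤ K / lam ^ n / lam := div_le_div₀ (by positivity) (ih (F p)) hlam0 (ha p)
        _ = K / lam ^ (n + 1) := by rw [div_div, pow_succ]
  have htendsto : Tendsto (fun n : ℕ => K / lam ^ n) atTop (𝓝 0) :=
    tendsto_const_nhds.div_atTop (tendsto_pow_atTop_atTop_of_one_lt hlam)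
  funext p
  exact abs_nonpos_iff.mp (ge_of_tendsto' htendsto fun n => hdecay n p)

end CentralSlope

open CentralSlope in
theorem central_slope_series_general
    {X : Type*} (F : X → X) (lam M : ℝ) (hlam : 1 < lam)
    (a b : X → ℝ) (ha : ∀ p, lam ≤ a p) (hb : ∀ p, |b p| ≤ M)
    (S : X → ℝ)
    (hS : ∀ p, S p = -∑' k : ℕ, b (F^[k] p) / ∏ j ∈ Finset.range (k + 1), a (F^[j] p)) :
    (∀ p, Summable (fun k : ℕ =>
      |b (F^[k] p) / ∏ j ∈ Finset.range (k + 1), a (F^[j] p)|)) ∧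
    (∀ p, |S p| ≤ M / (lam - 1)) ∧
    (∀ p, S p = (S (F p) - b p) / a p) ∧
    (∀ S' : X → ℝ, (∃ C : ℝ, ∀ p, |S' p| ≤ C) →
      (∀ p, S' p = (S' (F p) - b p) / a p) → S' = S) := by
  have hS_bound : ∀ p, |S p| ≤ M / (lam - 1) := fun p => by
    rw [hS p, abs_neg]
    exact abs_tsum_slopeTerm_le hlam ha hb p
  have hS_inv : ∀ p, S p = (S (F p) - b p) / a p := fun p => by
    rw [hS p, hS (F p)]
    change -∑' k, slopeTerm F a b p k = (-∑' k, slopeTerm F a b (F p) k - b p) / a p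
    rw [tsum_slopeTerm_eq hlam ha hb p]
    ring
  refine ⟨summable_abs_slopeTerm hlam ha hb, hS_bound, hS_inv, ?_⟩
  rintro S' ⟨C, hC⟩ hS'
  have hdiff : S' - S = 0 := by
    refine eq_zero_of_bounded_of_eq_div (F := F) (K := C + M / (lam - 1)) hlam ha
      (fun p => ?_) (fun p => ?_)
    · exact (abs_sub _ _).trans (add_le_add (hC p) (hS_bound p))
    · simp only [Pi.sub_apply]
      rw [hS' p, hS_inv p]
      ring
  exact sub_eq_zero.mp hdiff

/-- The series `s(p) = -∑ₖ b(Fᵏp) / ∏_{j≤k} a(Fʲp)` converges absolutely, is bounded by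
`M/(λ-1)`, and is the unique bounded solution of the invariance equation
`s(p) = (s(F p) - b(p))/a(p)`. -/
theorem central_slope_series
    {X : Type*} [Nonempty X] (F : X → X) (lam M : ℝ) (hlam : 1 < lam) (hM : 0 < M)
    (a b : X → ℝ) (ha : ∀ p, lam ≤ a p) (hb : ∀ p, |b p| ≤ M)
    (S : X → ℝ)
    (hS : ∀ p, S p = -∑' k : ℕ, b (F^[k] p) / ∏ j ∈ Finset.range (k + 1), a (F^[j] p)) :
    (∀ p, Summable (fun k : ℕ =>
      |b (F^[k] p) / ∏ j ∈ Finset.range (k + 1), a (F^[j] p)|)) ∧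
    (∀ p, |S p| ≤ M / (lam - 1)) ∧
    (∀ p, S p = (S (F p) - b p) / a p) ∧
    (∀ S' : X → ℝ, (∃ C : ℝ, ∀ p, |S' p| ≤ C) →
      (∀ p, S' p = (S' (F p) - b p) / a p) → S' = S) :=
  central_slope_series_general F lam M hlam a b ha hb S hS
end
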